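/- arXiv:2305.16858 — 6 statements merged into one kernel-verified Lean document; each statement's English description precedes it below -/
import Mathlib

section
/- (GM-switching, Godsil–McKay.) Let Γ be a finite simple graph and let {C_1, C_2, …, C_k, D} be a partition of its vertex set such that for all i, j ∈ {1,…,k}: (i) any two vertices of C_i have the same number of neighbours in C_j, and (ii) every vertex of D has exactly 0, |C_i|/2 or |C_i| neighbours in C_i. Let Γ' be the graph obtained from Γ by, for each i ∈ {1,…,k}, each u ∈ C_i and each v ∈ D having exactly |C_i|/2 neighbours in C_i, reversing the adjacency between u and v (all other adjacencies unchanged). Then Γ' is cospectral with Γ. -/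
/-- The characteristic polynomial (over `ℤ`) of the adjacency matrix of a finite graph. -/
noncomputable def graphCharPoly {V : Type*} [Finite V] (G : SimpleGraph V) : Polynomial ℤ :=
  letI := Fintype.ofFinite V
  letI := Classical.decEq V
  letI := Classical.decRel G.Adj
  (SimpleGraph.adjMatrix ℤ G).charpoly

/-- Two finite graphs are cospectral if their adjacency matrices have the same
characteristic polynomial. -/
def Cospectral {V W : Type*} [Finite V] [Finite W]
    (G : SimpleGraph V) (H : SimpleGraph W) : Prop :=
  graphCharPoly G = graphCharPoly H

/-- The number of neighbours of `v` (in the graph `G`) lying in the set `A`. -/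
noncomputable def nbrsIn {V : Type*} (G : SimpleGraph V) (v : V) (A : Finset V) : ℕ :=
  Nat.card {u : V // u ∈ A ∧ G.Adj v u}

/-- The ordered pair `(u, v)` gets switched in GM-switching: `u` lies in some part `C i`
and `v` lies in `D` and has exactly half of `C i` as neighbours. -/
def gmSwitchPair {V : Type*} (G : SimpleGraph V) {k : ℕ}
    (C : Fin k → Finset V) (D : Finset V) (u v : V) : Prop :=
  ∃ i, u ∈ C i ∧ v ∈ D ∧ 2 * nbrsIn G v (C i) = (C i).card

/-!
Let `Q` be block diagonal with block `(2 / |C i|) J - I` on each `C i` and `I` on `D`. Each such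
block is the reflection in the line of constant vectors, so `Q` is a symmetric involution and
`Q A Q` has the characteristic polynomial of `A`; it remains to see that `Q A Q = A'`.
By (i) the block `A (C i) (C j)` has constant row sums `r` and column sums `s`, with
`|C i| r = |C j| s` by double counting, and then the two reflections leave it unchanged.
A column of `A (C i) D` is the indicator of the neighbours in `C i` of some `v ∈ D`; the
reflection fixes the indicators of `∅` and of `C i` and sends one of size `|C i| / 2` to its
complement, which is exactly the switching.
-/

open Finset Matrix Function

section SwitchingMatrix

variable {V : Type*} [DecidableEq V] {k : ℕ}

/-- `(2 / |C i|) J - I` on each block `C i × C i`, and the identity away from the `C i`. -/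
def gmSwitchingMatrix (C : Fin k → Finset V) : Matrix V V ℚ :=
  of fun u x => (if u = x then 1 else 0) +
    ∑ i, if u ∈ C i ∧ x ∈ C i then (2 / #(C i) : ℚ) - 2 * (if u = x then 1 else 0) else 0

variable {C : Fin k → Finset V}

lemma isSymm_gmSwitchingMatrix : (gmSwitchingMatrix C).IsSymm :=
  IsSymm.ext fun u x => by simp only [gmSwitchingMatrix, of_apply, eq_comm, and_comm]

lemma gmSwitchingMatrix_apply_of_mem (hC : Pairwise (Disjoint on C)) {i : Fin k} {u : V}
    (hu : u ∈ C i) (x : V) :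
    gmSwitchingMatrix C u x =
      (if x ∈ C i then (2 / #(C i) : ℚ) else 0) - if u = x then 1 else 0 := by
  rw [gmSwitchingMatrix, of_apply, sum_eq_single i]
  · rcases eq_or_ne u x with rfl | hux
    · simp only [hu, and_self, if_true]
      ring
    · simp [hu, hux]
  · exact fun j _ hji => if_neg fun h => disjoint_left.mp (hC hji) h.1 hu
  · simp

lemma gmSwitchingMatrix_apply_of_forall_notMem {u : V} (hu : ∀ i, u ∉ C i) (x : V) :
    gmSwitchingMatrix C u x = if u = x then 1 else 0 := by
  simp [gmSwitchingMatrix, hu]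

variable [Fintype V]

lemma gmSwitchingMatrix_mul_apply_of_mem (hC : Pairwise (Disjoint on C)) {i : Fin k} {u : V}
    (hu : u ∈ C i) (M : Matrix V V ℚ) (v : V) :
    (gmSwitchingMatrix C * M) u v = (2 / #(C i) : ℚ) * ∑ x ∈ C i, M x v - M u v := by
  simp only [mul_apply, gmSwitchingMatrix_apply_of_mem hC hu, sub_mul, ite_mul, zero_mul,
    one_mul, sum_sub_distrib, sum_ite_eq, mem_univ, if_true, ← sum_filter, filter_mem_eq_inter,
    univ_inter, mul_sum]

lemma gmSwitchingMatrix_mul_apply_of_forall_notMem {u : V} (hu : ∀ i, u ∉ C i)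
    (M : Matrix V V ℚ) (v : V) : (gmSwitchingMatrix C * M) u v = M u v := by
  simp [mul_apply, gmSwitchingMatrix_apply_of_forall_notMem hu]

lemma mul_gmSwitchingMatrix_apply_of_mem (hC : Pairwise (Disjoint on C)) {j : Fin k} {v : V}
    (hv : v ∈ C j) (M : Matrix V V ℚ) (u : V) :
    (M * gmSwitchingMatrix C) u v = (2 / #(C j) : ℚ) * ∑ y ∈ C j, M u y - M u v := by
  rw [← transpose_apply (M * _), transpose_mul, isSymm_gmSwitchingMatrix.eq,
    gmSwitchingMatrix_mul_apply_of_mem hC hv]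
  rfl

lemma mul_gmSwitchingMatrix_apply_of_forall_notMem {v : V} (hv : ∀ i, v ∉ C i)
    (M : Matrix V V ℚ) (u : V) : (M * gmSwitchingMatrix C) u v = M u v := by
  rw [← transpose_apply (M * _), transpose_mul, isSymm_gmSwitchingMatrix.eq,
    gmSwitchingMatrix_mul_apply_of_forall_notMem hv]
  rfl

lemma Matrix.IsSymm.gmSwitchingMatrix_mul_mul {M : Matrix V V ℚ} (hM : M.IsSymm) :
    (gmSwitchingMatrix C * M * gmSwitchingMatrix C).IsSymm := by
  rw [IsSymm, transpose_mul, transpose_mul, isSymm_gmSwitchingMatrix.eq, hM.eq, Matrix.mul_assoc]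

lemma gmSwitchingMatrix_mul_self (hC : Pairwise (Disjoint on C)) :
    gmSwitchingMatrix C * gmSwitchingMatrix C = 1 := by
  ext u v
  rw [one_apply]
  by_cases hu : ∃ i, u ∈ C i
  · obtain ⟨i, hu⟩ := hu
    have hcard : (#(C i) : ℚ) ≠ 0 := Nat.cast_ne_zero.mpr (card_ne_zero_of_mem hu)
    rw [gmSwitchingMatrix_mul_apply_of_mem hC hu,
      sum_congr rfl fun x hx => gmSwitchingMatrix_apply_of_mem hC hx v,
      gmSwitchingMatrix_apply_of_mem hC hu, sum_sub_distrib, sum_const, sum_ite_eq']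
    by_cases hv : v ∈ C i <;> by_cases huv : u = v <;> simp [hv, huv] <;> field_simp <;> ring
  · push Not at hu
    rw [gmSwitchingMatrix_mul_apply_of_forall_notMem hu,
      gmSwitchingMatrix_apply_of_forall_notMem hu]

end SwitchingMatrix

section Neighbours

variable {V : Type*} (G : SimpleGraph V) [DecidableRel G.Adj]

lemma nbrsIn_eq_card_filter (v : V) (A : Finset V) : nbrsIn G v A = #{u ∈ A | G.Adj v u} := by
  rw [nbrsIn, ← Nat.card_eq_finsetCard]
  simp only [mem_filter]

variable {G}

lemma not_adj_of_nbrsIn_eq_zero {v u : V} {A : Finset V} (h : nbrsIn G v A = 0) (hu : u ∈ A) :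
    ¬ G.Adj v u := by
  rw [nbrsIn_eq_card_filter, card_eq_zero, filter_eq_empty_iff] at h
  exact h hu

lemma adj_of_nbrsIn_eq_card {v u : V} {A : Finset V} (h : nbrsIn G v A = #A) (hu : u ∈ A) :
    G.Adj v u := by
  rw [nbrsIn_eq_card_filter, card_filter_eq_iff] at h
  exact h u hu

lemma two_div_card_mul_nbrsIn_sub_adjMatrix {S : Finset V} {v u : V} (hu : u ∈ S)
    (hv : nbrsIn G v S = 0 ∨ 2 * nbrsIn G v S = #S ∨ nbrsIn G v S = #S) :
    (2 / #S : ℚ) * nbrsIn G v S - G.adjMatrix ℚ v u =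
      if 2 * nbrsIn G v S = #S then 1 - G.adjMatrix ℚ v u else G.adjMatrix ℚ v u := by
  have hS : #S ≠ 0 := card_ne_zero_of_mem hu
  rcases hv with h | h | h
  · rw [if_neg (by omega), h, SimpleGraph.adjMatrix_apply, if_neg (not_adj_of_nbrsIn_eq_zero h hu)]
    simp
  · rw [if_pos h]
    congr 1
    field_simp
    exact_mod_cast h
  · rw [if_neg (by omega), h, SimpleGraph.adjMatrix_apply, if_pos (adj_of_nbrsIn_eq_card h hu)]
    field_simp
    norm_num

variable (G)

lemma natCast_nbrsIn_eq_sum_adjMatrix {R : Type*} [NonAssocSemiring R] (v : V) (A : Finset V) :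
    (nbrsIn G v A : R) = ∑ x ∈ A, G.adjMatrix R v x := by
  simp [nbrsIn_eq_card_filter, SimpleGraph.adjMatrix_apply, sum_boole]

lemma sum_nbrsIn_comm (S T : Finset V) : ∑ u ∈ S, nbrsIn G u T = ∑ v ∈ T, nbrsIn G v S := by
  have h := natCast_nbrsIn_eq_sum_adjMatrix G (R := ℕ)
  simp only [Nat.cast_id] at h
  simp only [h]
  exact sum_comm.trans
    (sum_congr rfl fun _ _ => sum_congr rfl fun _ _ => G.isSymm_adjMatrix.apply _ _)

lemma SimpleGraph.map_adjMatrix {α β : Type*} [NonAssocSemiring α] [NonAssocSemiring β]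
    (f : α →+* β) : (G.adjMatrix α).map f = G.adjMatrix β := by
  ext u v
  simp [SimpleGraph.adjMatrix_apply, apply_ite f]

variable {G}

lemma card_mul_eq_card_mul_of_nbrsIn_eq {S T : Finset V} {r s : ℕ}
    (hS : ∀ u ∈ S, nbrsIn G u T = r) (hT : ∀ v ∈ T, nbrsIn G v S = s) : #S * r = #T * s := by
  rw [← sum_const_nat hS, ← sum_const_nat hT, sum_nbrsIn_comm]

lemma SimpleGraph.adjMatrix_apply_eq_ite_of_adj_iff {H : SimpleGraph V} [DecidableRel H.Adj]
    {R : Type*} [Ring R] {p : Prop} [Decidable p] {u v : V}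
    (h : H.Adj u v ↔ (p ∧ ¬ G.Adj u v) ∨ (¬ p ∧ G.Adj u v)) :
    H.adjMatrix R u v = if p then 1 - G.adjMatrix R u v else G.adjMatrix R u v := by
  by_cases hp : p <;> by_cases hG : G.Adj u v <;> simp [SimpleGraph.adjMatrix_apply, h, hp, hG]

end Neighbours

section Conjugation

variable {V : Type*} [Fintype V] [DecidableEq V] {k : ℕ} {C : Fin k → Finset V}
  {G : SimpleGraph V} [DecidableRel G.Adj] {u v : V}

lemma gmSwitchingMatrix_conj_adjMatrix_apply_of_forall_notMem (hu : ∀ i, u ∉ C i)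
    (hv : ∀ j, v ∉ C j) :
    (gmSwitchingMatrix C * G.adjMatrix ℚ * gmSwitchingMatrix C) u v = G.adjMatrix ℚ u v := by
  rw [Matrix.mul_assoc, gmSwitchingMatrix_mul_apply_of_forall_notMem hu,
    mul_gmSwitchingMatrix_apply_of_forall_notMem hv]

lemma gmSwitchingMatrix_conj_adjMatrix_apply_of_forall_notMem_of_mem
    (hC : Pairwise (Disjoint on C)) {j : Fin k} (hu : ∀ i, u ∉ C i) (hv : v ∈ C j) :
    (gmSwitchingMatrix C * G.adjMatrix ℚ * gmSwitchingMatrix C) u v =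
      (2 / #(C j) : ℚ) * nbrsIn G u (C j) - G.adjMatrix ℚ u v := by
  rw [Matrix.mul_assoc, gmSwitchingMatrix_mul_apply_of_forall_notMem hu,
    mul_gmSwitchingMatrix_apply_of_mem hC hv, natCast_nbrsIn_eq_sum_adjMatrix]

lemma gmSwitchingMatrix_conj_adjMatrix_apply_of_mem_of_mem
    (hC : Pairwise (Disjoint on C)) {i j : Fin k} (hu : u ∈ C i) (hv : v ∈ C j)
    (hij : ∀ x ∈ C i, nbrsIn G x (C j) = nbrsIn G u (C j))
    (hji : ∀ y ∈ C j, nbrsIn G y (C i) = nbrsIn G v (C i)) :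
    (gmSwitchingMatrix C * G.adjMatrix ℚ * gmSwitchingMatrix C) u v = G.adjMatrix ℚ u v := by
  have hrow : ∀ x ∈ C i, ∑ y ∈ C j, G.adjMatrix ℚ x y = nbrsIn G u (C j) := fun x hx => by
    rw [← natCast_nbrsIn_eq_sum_adjMatrix, hij x hx]
  have hcol : ∑ x ∈ C i, G.adjMatrix ℚ x v = nbrsIn G v (C i) := by
    rw [natCast_nbrsIn_eq_sum_adjMatrix]
    exact sum_congr rfl fun x _ => G.isSymm_adjMatrix.apply v x
  have hcount : (#(C i) : ℚ) * nbrsIn G u (C j) = #(C j) * nbrsIn G v (C i) := by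
    exact_mod_cast card_mul_eq_card_mul_of_nbrsIn_eq hij hji
  have hci : (#(C i) : ℚ) ≠ 0 := Nat.cast_ne_zero.mpr (card_ne_zero_of_mem hu)
  have hcj : (#(C j) : ℚ) ≠ 0 := Nat.cast_ne_zero.mpr (card_ne_zero_of_mem hv)
  rw [Matrix.mul_assoc, gmSwitchingMatrix_mul_apply_of_mem hC hu,
    sum_congr rfl fun x _ => mul_gmSwitchingMatrix_apply_of_mem hC hv _ x,
    mul_gmSwitchingMatrix_apply_of_mem hC hv, sum_sub_distrib,
    sum_congr rfl fun x hx => by rw [hrow x hx], sum_const, hcol, hrow u hu, nsmul_eq_mul]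
  field_simp
  linear_combination 2 * hcount

end Conjugation

section Switching

variable {V : Type*} {k : ℕ} {C : Fin k → Finset V} {D : Finset V} {G : SimpleGraph V} {u v : V}

lemma not_gmSwitchPair_of_forall_notMem (hu : ∀ i, u ∉ C i) : ¬ gmSwitchPair G C D u v :=
  fun ⟨i, hui, _⟩ => hu i hui

lemma gmSwitchPair.right_mem (h : gmSwitchPair G C D u v) : v ∈ D :=
  h.choose_spec.2.1

lemma gmSwitchPair_iff_of_mem (hC : Pairwise (Disjoint on C)) {i : Fin k} (hu : u ∈ C i) :
    gmSwitchPair G C D u v ↔ v ∈ D ∧ 2 * nbrsIn G v (C i) = #(C i) := by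
  constructor
  · rintro ⟨j, hj, hv, h⟩
    obtain rfl : j = i := hC.eq (not_disjoint_iff.mpr ⟨u, hj, hu⟩)
    exact ⟨hv, h⟩
  · exact fun ⟨hv, h⟩ => ⟨i, hu, hv, h⟩

variable [Fintype V] [DecidableEq V] [DecidableRel G.Adj]

theorem gmSwitchingMatrix_conj_adjMatrix {G' : SimpleGraph V} [DecidableRel G'.Adj]
    (hC : Pairwise (Disjoint on C)) (hCD : ∀ i, Disjoint (C i) D)
    (hcover : ∀ v : V, v ∈ D ∨ ∃ i, v ∈ C i)
    (hequit : ∀ i j : Fin k, ∀ u ∈ C i, ∀ u' ∈ C i, nbrsIn G u (C j) = nbrsIn G u' (C j))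
    (hDcounts : ∀ v ∈ D, ∀ i, nbrsIn G v (C i) = 0 ∨
      2 * nbrsIn G v (C i) = #(C i) ∨ nbrsIn G v (C i) = #(C i))
    (hG' : ∀ u v : V, G'.Adj u v ↔
      (((gmSwitchPair G C D u v ∨ gmSwitchPair G C D v u) ∧ ¬ G.Adj u v) ∨
       (¬ (gmSwitchPair G C D u v ∨ gmSwitchPair G C D v u) ∧ G.Adj u v))) :
    gmSwitchingMatrix C * G.adjMatrix ℚ * gmSwitchingMatrix C = G'.adjMatrix ℚ := by
  classical
  have hnotMem : ∀ {w}, w ∈ D → ∀ i, w ∉ C i := fun hw i h => disjoint_left.mp (hCD i) h hw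
  have hrowD : ∀ u ∈ D, ∀ v,
      (gmSwitchingMatrix C * G.adjMatrix ℚ * gmSwitchingMatrix C) u v = G'.adjMatrix ℚ u v := by
    intro u hu v
    have hnot : ¬ gmSwitchPair G C D u v := not_gmSwitchPair_of_forall_notMem (hnotMem hu)
    rw [SimpleGraph.adjMatrix_apply_eq_ite_of_adj_iff (hG' u v)]
    rcases hcover v with hv | ⟨j, hv⟩
    · rw [gmSwitchingMatrix_conj_adjMatrix_apply_of_forall_notMem (hnotMem hu) (hnotMem hv),
        if_neg (not_or.mpr ⟨hnot, not_gmSwitchPair_of_forall_notMem (hnotMem hv)⟩)]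
    · simp only [hnot, false_or, gmSwitchPair_iff_of_mem hC hv, hu, true_and]
      rw [gmSwitchingMatrix_conj_adjMatrix_apply_of_forall_notMem_of_mem hC (hnotMem hu) hv,
        two_div_card_mul_nbrsIn_sub_adjMatrix hv (hDcounts u hu j)]
  ext u v
  rcases hcover u with hu | ⟨i, hu⟩
  · exact hrowD u hu v
  rcases hcover v with hv | ⟨j, hv⟩
  · rw [← G.isSymm_adjMatrix.gmSwitchingMatrix_mul_mul.apply, hrowD v hv u,
      G'.isSymm_adjMatrix.apply]
  · rw [gmSwitchingMatrix_conj_adjMatrix_apply_of_mem_of_mem hC hu hv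
      (fun x hx => hequit i j x hx u hu) (fun y hy => hequit j i y hy v hv),
      SimpleGraph.adjMatrix_apply_eq_ite_of_adj_iff (hG' u v), if_neg]
    rintro (h | h)
    · exact hnotMem h.right_mem j hv
    · exact hnotMem h.right_mem i hu

end Switching

lemma SimpleGraph.charpoly_adjMatrix_eq_of_conj {V : Type*} [Fintype V] [DecidableEq V]
    {G H : SimpleGraph V} [DecidableRel G.Adj] [DecidableRel H.Adj] {Q : Matrix V V ℚ}
    (hQ : Q * Q = 1) (h : Q * G.adjMatrix ℚ * Q = H.adjMatrix ℚ) :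
    (G.adjMatrix ℤ).charpoly = (H.adjMatrix ℤ).charpoly := by
  apply Polynomial.map_injective (Int.castRingHom ℚ) Int.cast_injective
  rw [← charpoly_map, ← charpoly_map, G.map_adjMatrix, H.map_adjMatrix, ← h, charpoly_mul_comm,
    ← Matrix.mul_assoc, hQ, Matrix.one_mul]

/-- **GM-switching** (Godsil–McKay). If `{C 1, …, C k, D}` is a partition of the vertex
set of `Γ` such that (i) any two vertices of `C i` have the same number of neighbours in
`C j`, and (ii) every vertex of `D` has exactly `0`, `|C i|/2` or `|C i|` neighbours in
`C i`, then the graph `Γ'` obtained by reversing the adjacency between every `u ∈ C i`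
and every `v ∈ D` having exactly `|C i|/2` neighbours in `C i` is cospectral with `Γ`. -/
theorem gm_switching {V : Type*} [Finite V] (Γ Γ' : SimpleGraph V)
    (k : ℕ) (C : Fin k → Finset V) (D : Finset V)
    (hCD : ∀ i, Disjoint (C i) D)
    (hCC : ∀ i j, i ≠ j → Disjoint (C i) (C j))
    (hcover : ∀ v : V, v ∈ D ∨ ∃ i, v ∈ C i)
    (hi : ∀ i j : Fin k, ∀ u ∈ C i, ∀ u' ∈ C i,
      nbrsIn Γ u (C j) = nbrsIn Γ u' (C j))
    (hii : ∀ v ∈ D, ∀ i, nbrsIn Γ v (C i) = 0 ∨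
      2 * nbrsIn Γ v (C i) = (C i).card ∨ nbrsIn Γ v (C i) = (C i).card)
    (hΓ' : ∀ u v : V, Γ'.Adj u v ↔
      (((gmSwitchPair Γ C D u v ∨ gmSwitchPair Γ C D v u) ∧ ¬ Γ.Adj u v) ∨
       (¬ (gmSwitchPair Γ C D u v ∨ gmSwitchPair Γ C D v u) ∧ Γ.Adj u v))) :
    Cospectral Γ Γ' := by
  let _ := Fintype.ofFinite V
  unfold Cospectral graphCharPoly
  classical
  exact SimpleGraph.charpoly_adjMatrix_eq_of_conj (gmSwitchingMatrix_mul_self hCC)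
    (gmSwitchingMatrix_conj_adjMatrix hCC hCD hcover hi hii hΓ')
end

section
/- (WQH-switching, Wang–Qiu–Hu.) Let Γ be a finite simple graph and C_1, C_2 disjoint subsets of its vertex set such that: (i) |C_1| = |C_2|; (ii) there is a constant c such that for all i ≠ j in {1,2} and every vertex u of C_i, the number of neighbours of u in C_i minus the number of neighbours of u in C_j equals c; (iii) every vertex v outside C_1 ∪ C_2 has either (a) |C_1| neighbours in C_1 and 0 neighbours in C_2, or (b) 0 neighbours in C_1 and |C_2| neighbours in C_2, or (c) the same number of neighbours in C_1 as in C_2. Let Γ' be the graph obtained from Γ by reversing the adjacency between every u ∈ C_1 ∪ C_2 and every v ∉ C_1 ∪ C_2 of type (a) or (b) (all other adjacencies unchanged). Then Γ' is cospectral with Γ. -/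
/-- A vertex outside `C₁ ∪ C₂` is of type (a) or (b) in WQH-switching: it has `|C₁|`
neighbours in `C₁` and `0` in `C₂`, or `0` neighbours in `C₁` and `|C₂|` in `C₂`. -/
def wqhSwitchedVert {V : Type*} (G : SimpleGraph V) (C₁ C₂ : Finset V) (v : V) : Prop :=
  (nbrsIn G v C₁ = C₁.card ∧ nbrsIn G v C₂ = 0) ∨
  (nbrsIn G v C₁ = 0 ∧ nbrsIn G v C₂ = C₂.card)

/-- The ordered pair `(u, v)` gets switched in WQH-switching. -/
def wqhSwitchPair {V : Type*} [DecidableEq V] (G : SimpleGraph V) (C₁ C₂ : Finset V) (u v : V) : Prop :=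
  (u ∈ C₁ ∪ C₂) ∧ v ∉ C₁ ∪ C₂ ∧ wqhSwitchedVert G C₁ C₂ v

open Matrix Polynomial Finset
/- ------------------ auxiliary lemmas ------------------ -/

lemma charpoly_conj_aux {n : Type*} [Fintype n] [DecidableEq n] {R : Type*} [CommRing R]
    (Q A : Matrix n n R) (hQ : Q * Q = 1) : (Q * A * Q).charpoly = A.charpoly := by
  set f := (C : R →+* R[X]).mapMatrix (m := n)
  have hf : f Q * f Q = 1 := by rw [← _root_.map_mul, hQ, _root_.map_one]
  have hcm : charmatrix (Q * A * Q) = f Q * charmatrix A * f Q := by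
    unfold charmatrix
    rw [_root_.map_mul, _root_.map_mul, mul_sub, sub_mul]
    congr 1
    have := (Matrix.scalar_commute (n := n) (X : R[X]) (Commute.all X) (f Q)).eq
    rw [← this, mul_assoc, hf, mul_one]
  unfold Matrix.charpoly
  rw [hcm, det_mul, det_mul]
  have hd : (f Q).det * (f Q).det = 1 := by rw [← det_mul, hf, det_one]
  calc (f Q).det * (charmatrix A).det * (f Q).det
      = ((f Q).det * (f Q).det) * (charmatrix A).det := by ring
    _ = (charmatrix A).det := by rw [hd, one_mul]

section NbrsAux

variable {V : Type*} [Fintype V] [DecidableEq V]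

lemma nbrsIn_eq_card (G : SimpleGraph V) [DecidableRel G.Adj] (v : V) (A : Finset V) :
    nbrsIn G v A = (A.filter fun u => G.Adj v u).card := by
  rw [nbrsIn, Nat.card_eq_fintype_card, Fintype.card_subtype]
  congr 1
  ext u
  simp [and_comm]

lemma nbrsIn_congr {G H : SimpleGraph V} [DecidableRel G.Adj] [DecidableRel H.Adj] {u : V}
    {B : Finset V} (h : ∀ v ∈ B, (G.Adj u v ↔ H.Adj u v)) : nbrsIn G u B = nbrsIn H u B := by
  rw [nbrsIn_eq_card, nbrsIn_eq_card]
  congr 1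
  exact Finset.filter_congr h

lemma nbrsIn_eq_zero {G : SimpleGraph V} [DecidableRel G.Adj] {u : V} {B : Finset V}
    (h : ∀ v ∈ B, ¬ G.Adj u v) : nbrsIn G u B = 0 := by
  rw [nbrsIn_eq_card, Finset.card_eq_zero, Finset.filter_eq_empty_iff]
  exact h

lemma nbrsIn_eq_cardB {G : SimpleGraph V} [DecidableRel G.Adj] {u : V} {B : Finset V}
    (h : ∀ v ∈ B, G.Adj u v) : nbrsIn G u B = B.card := by
  rw [nbrsIn_eq_card, Finset.filter_true_of_mem h]

lemma all_adj_of_nbrsIn {G : SimpleGraph V} [DecidableRel G.Adj] {u : V} {B : Finset V}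
    (h : nbrsIn G u B = B.card) : ∀ v ∈ B, G.Adj u v := by
  rw [nbrsIn_eq_card] at h
  exact Finset.filter_card_eq h

lemma none_adj_of_nbrsIn {G : SimpleGraph V} [DecidableRel G.Adj] {u : V} {B : Finset V}
    (h : nbrsIn G u B = 0) : ∀ v ∈ B, ¬ G.Adj u v := by
  rw [nbrsIn_eq_card, Finset.card_eq_zero, Finset.filter_eq_empty_iff] at h
  exact h

lemma sum_adjMatrix_row (G : SimpleGraph V) [DecidableRel G.Adj] (u : V) (B : Finset V) :
    ∑ v ∈ B, (G.adjMatrix ℚ) u v = (nbrsIn G u B : ℚ) := by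
  rw [nbrsIn_eq_card]
  simp [SimpleGraph.adjMatrix_apply]

lemma sum_adjMatrix_col (G : SimpleGraph V) [DecidableRel G.Adj] (w : V) (B : Finset V) :
    ∑ v ∈ B, (G.adjMatrix ℚ) v w = (nbrsIn G w B : ℚ) := by
  rw [← sum_adjMatrix_row G w B]
  exact Finset.sum_congr rfl fun v _ => by
    simp only [SimpleGraph.adjMatrix_apply]
    exact if_congr (G.adj_comm v w) rfl rfl

end NbrsAux

/-- **WQH-switching** (Wang–Qiu–Hu). Let `C₁, C₂` be disjoint vertex subsets of `Γ` with
(i) `|C₁| = |C₂|`; (ii) a constant `c` such that for `{i,j} = {1,2}` every vertex of `Cᵢ`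
has (number of neighbours in `Cᵢ`) − (number of neighbours in `Cⱼ`) equal to `c`;
(iii) every vertex outside `C₁ ∪ C₂` has either `|C₁|` neighbours in `C₁` and none in
`C₂`, or none in `C₁` and `|C₂|` in `C₂`, or equally many in `C₁` and `C₂`. Then the
graph `Γ'` obtained by reversing the adjacency between every `u ∈ C₁ ∪ C₂` and every
`v ∉ C₁ ∪ C₂` of type (a) or (b) is cospectral with `Γ`. -/
theorem wqh_switching {V : Type*} [Finite V] [DecidableEq V] (Γ Γ' : SimpleGraph V)
    (C₁ C₂ : Finset V) (hdisj : Disjoint C₁ C₂) (hcard : C₁.card = C₂.card)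
    (c : ℤ)
    (hc₁ : ∀ u ∈ C₁, (nbrsIn Γ u C₁ : ℤ) - (nbrsIn Γ u C₂ : ℤ) = c)
    (hc₂ : ∀ u ∈ C₂, (nbrsIn Γ u C₂ : ℤ) - (nbrsIn Γ u C₁ : ℤ) = c)
    (hout : ∀ v : V, v ∉ C₁ ∪ C₂ →
      (nbrsIn Γ v C₁ = C₁.card ∧ nbrsIn Γ v C₂ = 0) ∨
      (nbrsIn Γ v C₁ = 0 ∧ nbrsIn Γ v C₂ = C₂.card) ∨
      nbrsIn Γ v C₁ = nbrsIn Γ v C₂)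
    (hΓ' : ∀ u v : V, Γ'.Adj u v ↔
      (((wqhSwitchPair Γ C₁ C₂ u v ∨ wqhSwitchPair Γ C₁ C₂ v u) ∧ ¬ Γ.Adj u v) ∨
       (¬ (wqhSwitchPair Γ C₁ C₂ u v ∨ wqhSwitchPair Γ C₁ C₂ v u) ∧ Γ.Adj u v))) :
    Cospectral Γ Γ' := by
  by_cases hC : C₁.card = 0
  · -- degenerate case: C₁ = C₂ = ∅ and Γ' = Γ
    have h1 : C₁ = ∅ := Finset.card_eq_zero.mp hC
    have h2 : C₂ = ∅ := Finset.card_eq_zero.mp (by omega)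
    have hGG : Γ' = Γ := by
      ext u v
      rw [hΓ' u v]
      have hp : ∀ a b : V, ¬ wqhSwitchPair Γ C₁ C₂ a b := by
        intro a b hab
        rcases hab with ⟨ha, -, -⟩
        rw [h1, h2] at ha
        simp at ha
      constructor
      · rintro (⟨hp' | hp', -⟩ | ⟨-, ha⟩)
        · exact (hp u v hp').elim
        · exact (hp v u hp').elim
        · exact ha
      · intro ha
        exact Or.inr ⟨fun hh => hh.elim (hp u v) (hp v u), ha⟩
    subst hGG
    rfl
  -- main case
  letI : Fintype V := Fintype.ofFinite V
  letI : DecidableRel Γ.Adj := Classical.decRel Γ.Adj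
  letI : DecidableRel Γ'.Adj := Classical.decRel Γ'.Adj
  have hn : ((C₁.card : ℚ)) ≠ 0 := Nat.cast_ne_zero.mpr hC
  have hn2 : ((C₂.card : ℚ)) = (C₁.card : ℚ) := by exact_mod_cast hcard.symm
  obtain ⟨x, hxdef⟩ : ∃ x : V → ℚ,
      x = fun v => (if v ∈ C₁ then (1:ℚ) else 0) - (if v ∈ C₂ then (1:ℚ) else 0) := ⟨_, rfl⟩
  have hx1 : ∀ v ∈ C₁, x v = 1 := by
    intro v hv
    have hv2 : v ∉ C₂ := Finset.disjoint_left.mp hdisj hv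
    simp [hxdef, hv, hv2]
  have hx2 : ∀ v ∈ C₂, x v = -1 := by
    intro v hv
    have hv1 : v ∉ C₁ := Finset.disjoint_right.mp hdisj hv
    simp [hxdef, hv, hv1]
  have hx0 : ∀ v, v ∉ C₁ ∪ C₂ → x v = 0 := by
    intro v hv
    have hv1 : v ∉ C₁ := fun h => hv (Finset.mem_union_left _ h)
    have hv2 : v ∉ C₂ := fun h => hv (Finset.mem_union_right _ h)
    simp [hxdef, hv1, hv2]
  have hxsq : ∑ v, x v * x v = 2 * (C₁.card : ℚ) := by
    have he : ∀ v : V, x v * x v = (if v ∈ C₁ then (1:ℚ) else 0) + (if v ∈ C₂ then (1:ℚ) else 0) := by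
      intro v
      by_cases h1 : v ∈ C₁ <;> by_cases h2 : v ∈ C₂
      · exact absurd h2 (Finset.disjoint_left.mp hdisj h1)
      all_goals simp [hxdef, h1, h2]
    rw [Finset.sum_congr rfl fun v _ => he v, Finset.sum_add_distrib]
    simp only [Finset.sum_ite_mem, Finset.univ_inter, Finset.sum_const, nsmul_eq_mul, mul_one]
    rw [hn2]; ring
  obtain ⟨Q, hQapp⟩ : ∃ Q : Matrix V V ℚ,
      ∀ u v, Q u v = (if u = v then (1:ℚ) else 0) - (C₁.card : ℚ)⁻¹ * (x u * x v) :=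
    ⟨Matrix.of fun u v => (if u = v then (1:ℚ) else 0) - (C₁.card : ℚ)⁻¹ * (x u * x v),
      fun _ _ => rfl⟩
  have hQQ : Q * Q = 1 := by
    ext i k
    rw [Matrix.mul_apply]
    have expand : ∀ j, Q i j * Q j k =
        (((if i = j then (1:ℚ) else 0) * (if j = k then (1:ℚ) else 0)
          - (if i = j then (1:ℚ) else 0) * ((C₁.card : ℚ)⁻¹ * (x j * x k)))
          - ((C₁.card : ℚ)⁻¹ * (x i * x j)) * (if j = k then (1:ℚ) else 0))
          + ((C₁.card : ℚ)⁻¹ * (C₁.card : ℚ)⁻¹ * x i * x k) * (x j * x j) := by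
      intro j; rw [hQapp, hQapp]; ring
    have s1 : ∑ j, (if i = j then (1:ℚ) else 0) * (if j = k then (1:ℚ) else 0)
        = if i = k then (1:ℚ) else 0 := by
      simp [Finset.sum_ite_eq]
    have s2 : ∑ j, (if i = j then (1:ℚ) else 0) * ((C₁.card : ℚ)⁻¹ * (x j * x k))
        = (C₁.card : ℚ)⁻¹ * (x i * x k) := by
      simp [Finset.sum_ite_eq]
    have s3 : ∑ j, ((C₁.card : ℚ)⁻¹ * (x i * x j)) * (if j = k then (1:ℚ) else 0)
        = (C₁.card : ℚ)⁻¹ * (x i * x k) := by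
      simp [Finset.sum_ite_eq']
    rw [Finset.sum_congr rfl fun j _ => expand j, Finset.sum_add_distrib,
      Finset.sum_sub_distrib, Finset.sum_sub_distrib, ← Finset.mul_sum, hxsq,
      s1, s2, s3, Matrix.one_apply]
    linear_combination (2 * (C₁.card : ℚ)⁻¹ * (x i * x k)) * inv_mul_cancel₀ hn
  -- adjacency of Γ' vs Γ
  have noswitch : ∀ u v, ¬ wqhSwitchPair Γ C₁ C₂ u v → ¬ wqhSwitchPair Γ C₁ C₂ v u →
      (Γ'.Adj u v ↔ Γ.Adj u v) := by
    intro u v h1 h2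
    rw [hΓ' u v]
    constructor
    · rintro (⟨hp | hp, -⟩ | ⟨-, ha⟩)
      · exact (h1 hp).elim
      · exact (h2 hp).elim
      · exact ha
    · intro ha
      exact Or.inr ⟨fun hh => hh.elim h1 h2, ha⟩
  have doswitch : ∀ u v, (wqhSwitchPair Γ C₁ C₂ u v ∨ wqhSwitchPair Γ C₁ C₂ v u) →
      (Γ'.Adj u v ↔ ¬ Γ.Adj u v) := by
    intro u v hp
    rw [hΓ' u v]
    constructor
    · rintro (⟨-, hna⟩ | ⟨hnp, -⟩)
      · exact hna
      · exact (hnp hp).elim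
    · intro hna
      exact Or.inl ⟨hp, hna⟩
  have F1 : ∀ u v, u ∈ C₁ ∪ C₂ → v ∈ C₁ ∪ C₂ → (Γ'.Adj u v ↔ Γ.Adj u v) :=
    fun u v hu hv => noswitch u v (fun h => h.2.1 hv) (fun h => h.2.1 hu)
  have F2 : ∀ u v, u ∉ C₁ ∪ C₂ → v ∉ C₁ ∪ C₂ → (Γ'.Adj u v ↔ Γ.Adj u v) :=
    fun u v hu hv => noswitch u v (fun h => hu h.1) (fun h => hv h.1)
  have F3 : ∀ u v, u ∈ C₁ ∪ C₂ → v ∉ C₁ ∪ C₂ → wqhSwitchedVert Γ C₁ C₂ v →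
      (Γ'.Adj u v ↔ ¬ Γ.Adj u v) :=
    fun u v hu hv hsw => doswitch u v (Or.inl ⟨hu, hv, hsw⟩)
  have F3' : ∀ u v, u ∉ C₁ ∪ C₂ → v ∈ C₁ ∪ C₂ → wqhSwitchedVert Γ C₁ C₂ u →
      (Γ'.Adj u v ↔ ¬ Γ.Adj u v) := by
    intro u v hu hv hsw
    rw [Γ'.adj_comm u v, Γ.adj_comm u v]
    exact F3 v u hv hu hsw
  have F4 : ∀ u, u ∉ C₁ ∪ C₂ → ¬ wqhSwitchedVert Γ C₁ C₂ u → ∀ v,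
      (Γ'.Adj u v ↔ Γ.Adj u v) :=
    fun u hu hns v => noswitch u v (fun h => hu h.1) (fun h => hns h.2.2)
  have F4' : ∀ u v, v ∉ C₁ ∪ C₂ → ¬ wqhSwitchedVert Γ C₁ C₂ v → (Γ'.Adj u v ↔ Γ.Adj u v) := by
    intro u v hv hns
    rw [Γ'.adj_comm u v, Γ.adj_comm u v]
    exact F4 v hv hns u
  have hnsw : ∀ v, nbrsIn Γ v C₁ = nbrsIn Γ v C₂ → ¬ wqhSwitchedVert Γ C₁ C₂ v := by
    intro v heq hsw
    rcases hsw with ⟨h1, h2⟩ | ⟨h1, h2⟩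
    · exact hC (by omega)
    · exact hC (by omega)
  -- adjMatrix value helpers
  have hAone : ∀ a b : V, Γ.Adj a b → Γ.adjMatrix ℚ a b = 1 := by intro a b h; simp [h]
  have hAzero : ∀ a b : V, ¬ Γ.Adj a b → Γ.adjMatrix ℚ a b = 0 := by intro a b h; simp [h]
  have hA'one : ∀ a b : V, Γ'.Adj a b → Γ'.adjMatrix ℚ a b = 1 := by intro a b h; simp [h]
  have hA'zero : ∀ a b : V, ¬ Γ'.Adj a b → Γ'.adjMatrix ℚ a b = 0 := by intro a b h; simp [h]
  have adjEq : ∀ a b : V, (Γ'.Adj a b ↔ Γ.Adj a b) → Γ'.adjMatrix ℚ a b = Γ.adjMatrix ℚ a b := by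
    intro a b h
    simp only [SimpleGraph.adjMatrix_apply]
    exact if_congr h rfl rfl
  -- nbrsIn of Γ' for vertices inside C₁ ∪ C₂
  have hN1 : ∀ u ∈ C₁ ∪ C₂, nbrsIn Γ' u C₁ = nbrsIn Γ u C₁ :=
    fun u hu => nbrsIn_congr fun v hv => F1 u v hu (Finset.mem_union_left _ hv)
  have hN2 : ∀ u ∈ C₁ ∪ C₂, nbrsIn Γ' u C₂ = nbrsIn Γ u C₂ :=
    fun u hu => nbrsIn_congr fun v hv => F1 u v hu (Finset.mem_union_right _ hv)
  have hYin : ∀ z ∈ C₁ ∪ C₂, ((nbrsIn Γ z C₁ : ℚ) - (nbrsIn Γ z C₂ : ℚ)) = x z * (c : ℚ) := by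
    intro z hz
    rcases Finset.mem_union.mp hz with h | h
    · rw [hx1 z h, one_mul]
      exact_mod_cast hc₁ z h
    · rw [hx2 z h]
      have : ((nbrsIn Γ z C₂ : ℚ) - (nbrsIn Γ z C₁ : ℚ)) = (c : ℚ) := by exact_mod_cast hc₂ z h
      linarith
  -- row and column formulas
  have hrow : ∀ u w, (Q * Γ.adjMatrix ℚ) u w
      = Γ.adjMatrix ℚ u w
        - (C₁.card : ℚ)⁻¹ * x u * ((nbrsIn Γ w C₁ : ℚ) - (nbrsIn Γ w C₂ : ℚ)) := by
    intro u w
    rw [Matrix.mul_apply]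
    have expand : ∀ v, Q u v * Γ.adjMatrix ℚ v w =
        (if u = v then Γ.adjMatrix ℚ v w else 0)
          - ((C₁.card : ℚ)⁻¹ * x u) * (x v * Γ.adjMatrix ℚ v w) := by
      intro v; rw [hQapp]; split_ifs <;> ring
    have e2 : ∑ v, x v * Γ.adjMatrix ℚ v w
        = (nbrsIn Γ w C₁ : ℚ) - (nbrsIn Γ w C₂ : ℚ) := by
      have hterm : ∀ v : V, x v * Γ.adjMatrix ℚ v w =
          (if v ∈ C₁ then Γ.adjMatrix ℚ v w else 0)
            - (if v ∈ C₂ then Γ.adjMatrix ℚ v w else 0) := by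
        intro v
        rw [hxdef]
        by_cases h1 : v ∈ C₁ <;> by_cases h2 : v ∈ C₂
        · exact absurd h2 (Finset.disjoint_left.mp hdisj h1)
        all_goals simp [h1, h2]; try split_ifs <;> ring
      rw [Finset.sum_congr rfl fun v _ => hterm v, Finset.sum_sub_distrib]
      simp only [Finset.sum_ite_mem, Finset.univ_inter]
      rw [sum_adjMatrix_col, sum_adjMatrix_col]
    calc ∑ v, Q u v * Γ.adjMatrix ℚ v w
        = ∑ v, ((if u = v then Γ.adjMatrix ℚ v w else 0)
            - ((C₁.card : ℚ)⁻¹ * x u) * (x v * Γ.adjMatrix ℚ v w)) :=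
          Finset.sum_congr rfl fun v _ => expand v
      _ = (∑ v, if u = v then Γ.adjMatrix ℚ v w else 0)
            - ((C₁.card : ℚ)⁻¹ * x u) * ∑ v, x v * Γ.adjMatrix ℚ v w := by
          rw [Finset.sum_sub_distrib, Finset.mul_sum]
      _ = Γ.adjMatrix ℚ u w
            - (C₁.card : ℚ)⁻¹ * x u * ((nbrsIn Γ w C₁ : ℚ) - (nbrsIn Γ w C₂ : ℚ)) := by
          have e1 : (∑ v, if u = v then Γ.adjMatrix ℚ v w else 0) = Γ.adjMatrix ℚ u w := by
            simp [Finset.sum_ite_eq]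
          rw [e2, e1]
          try ring
  have hcol : ∀ u w, (Γ'.adjMatrix ℚ * Q) u w
      = Γ'.adjMatrix ℚ u w
        - (C₁.card : ℚ)⁻¹ * ((nbrsIn Γ' u C₁ : ℚ) - (nbrsIn Γ' u C₂ : ℚ)) * x w := by
    intro u w
    rw [Matrix.mul_apply]
    have expand : ∀ v, Γ'.adjMatrix ℚ u v * Q v w =
        (if v = w then Γ'.adjMatrix ℚ u v else 0)
          - ((C₁.card : ℚ)⁻¹ * x w) * (Γ'.adjMatrix ℚ u v * x v) := by
      intro v; rw [hQapp]; split_ifs <;> ring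
    have e2 : ∑ v, Γ'.adjMatrix ℚ u v * x v
        = (nbrsIn Γ' u C₁ : ℚ) - (nbrsIn Γ' u C₂ : ℚ) := by
      have hterm : ∀ v : V, Γ'.adjMatrix ℚ u v * x v =
          (if v ∈ C₁ then Γ'.adjMatrix ℚ u v else 0)
            - (if v ∈ C₂ then Γ'.adjMatrix ℚ u v else 0) := by
        intro v
        rw [hxdef]
        by_cases h1 : v ∈ C₁ <;> by_cases h2 : v ∈ C₂
        · exact absurd h2 (Finset.disjoint_left.mp hdisj h1)
        all_goals simp [h1, h2]; try split_ifs <;> ring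
      rw [Finset.sum_congr rfl fun v _ => hterm v, Finset.sum_sub_distrib]
      simp only [Finset.sum_ite_mem, Finset.univ_inter]
      rw [sum_adjMatrix_row, sum_adjMatrix_row]
    calc ∑ v, Γ'.adjMatrix ℚ u v * Q v w
        = ∑ v, ((if v = w then Γ'.adjMatrix ℚ u v else 0)
            - ((C₁.card : ℚ)⁻¹ * x w) * (Γ'.adjMatrix ℚ u v * x v)) :=
          Finset.sum_congr rfl fun v _ => expand v
      _ = (∑ v, if v = w then Γ'.adjMatrix ℚ u v else 0)
            - ((C₁.card : ℚ)⁻¹ * x w) * ∑ v, Γ'.adjMatrix ℚ u v * x v := by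
          rw [Finset.sum_sub_distrib, Finset.mul_sum]
      _ = Γ'.adjMatrix ℚ u w
            - (C₁.card : ℚ)⁻¹ * ((nbrsIn Γ' u C₁ : ℚ) - (nbrsIn Γ' u C₂ : ℚ)) * x w := by
          have e1 : (∑ v, if v = w then Γ'.adjMatrix ℚ u v else 0) = Γ'.adjMatrix ℚ u w := by
            simp [Finset.sum_ite_eq']
          rw [e2, e1]
          try ring
  -- the key intertwining identity
  have key : Q * Γ.adjMatrix ℚ = Γ'.adjMatrix ℚ * Q := by
    ext u w
    rw [hrow, hcol]
    by_cases hu : u ∈ C₁ ∪ C₂ <;> by_cases hw : w ∈ C₁ ∪ C₂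
    · -- both inside
      rw [adjEq u w (F1 u w hu hw), hYin w hw]
      rw [hN1 u hu, hN2 u hu, hYin u hu]
      ring
    · -- u inside, w outside
      simp only [hx0 w hw, mul_zero, sub_zero]
      rcases hout w hw with ⟨h1, h2⟩ | ⟨h1, h2⟩ | heq
      · have hsw : wqhSwitchedVert Γ C₁ C₂ w := Or.inl ⟨h1, h2⟩
        have hYw : ((nbrsIn Γ w C₁ : ℚ) - (nbrsIn Γ w C₂ : ℚ)) = (C₁.card : ℚ) := by
          rw [h1, h2]; simp
        rw [hYw]
        rcases Finset.mem_union.mp hu with hu1 | hu2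
        · have hadj : Γ.Adj u w := (all_adj_of_nbrsIn h1 u hu1).symm
          rw [hAone u w hadj, hA'zero u w (fun h => (F3 u w hu hw hsw).mp h hadj),
            hx1 u hu1]
          push_cast
          linear_combination (-1 : ℚ) * inv_mul_cancel₀ hn
        · have hadj : ¬ Γ.Adj u w := fun h => none_adj_of_nbrsIn h2 u hu2 h.symm
          rw [hAzero u w hadj, hA'one u w ((F3 u w hu hw hsw).mpr hadj), hx2 u hu2]
          push_cast
          linear_combination (1 : ℚ) * inv_mul_cancel₀ hn
      · have hsw : wqhSwitchedVert Γ C₁ C₂ w := Or.inr ⟨h1, h2⟩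
        have hYw : ((nbrsIn Γ w C₁ : ℚ) - (nbrsIn Γ w C₂ : ℚ)) = -(C₁.card : ℚ) := by
          rw [h1, h2, hn2]; simp
        rw [hYw]
        rcases Finset.mem_union.mp hu with hu1 | hu2
        · have hadj : ¬ Γ.Adj u w := fun h => none_adj_of_nbrsIn h1 u hu1 h.symm
          rw [hAzero u w hadj, hA'one u w ((F3 u w hu hw hsw).mpr hadj), hx1 u hu1]
          push_cast
          linear_combination (1 : ℚ) * inv_mul_cancel₀ hn
        · have hadj : Γ.Adj u w := (all_adj_of_nbrsIn h2 u hu2).symm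
          rw [hAone u w hadj, hA'zero u w (fun h => (F3 u w hu hw hsw).mp h hadj),
            hx2 u hu2]
          push_cast
          linear_combination (-1 : ℚ) * inv_mul_cancel₀ hn
      · have hYw : ((nbrsIn Γ w C₁ : ℚ) - (nbrsIn Γ w C₂ : ℚ)) = 0 := by
          rw [heq]; ring
        rw [hYw, adjEq u w (F4' u w hw (hnsw w heq))]
        ring
    · -- u outside, w inside
      simp only [hx0 u hu, mul_zero, zero_mul, sub_zero]
      rcases hout u hu with ⟨h1, h2⟩ | ⟨h1, h2⟩ | heq
      · have hsw : wqhSwitchedVert Γ C₁ C₂ u := Or.inl ⟨h1, h2⟩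
        have hn1' : nbrsIn Γ' u C₁ = 0 :=
          nbrsIn_eq_zero fun v hv h =>
            (F3' u v hu (Finset.mem_union_left _ hv) hsw).mp h (all_adj_of_nbrsIn h1 v hv)
        have hn2' : nbrsIn Γ' u C₂ = C₂.card :=
          nbrsIn_eq_cardB fun v hv =>
            (F3' u v hu (Finset.mem_union_right _ hv) hsw).mpr (none_adj_of_nbrsIn h2 v hv)
        rw [hn1', hn2', hn2]
        rcases Finset.mem_union.mp hw with hw1 | hw2
        · have hadj : Γ.Adj u w := all_adj_of_nbrsIn h1 w hw1
          rw [hAone u w hadj,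
            hA'zero u w (fun h => (F3' u w hu hw hsw).mp h hadj), hx1 w hw1]
          push_cast
          linear_combination (-1 : ℚ) * inv_mul_cancel₀ hn
        · have hadj : ¬ Γ.Adj u w := none_adj_of_nbrsIn h2 w hw2
          rw [hAzero u w hadj, hA'one u w ((F3' u w hu hw hsw).mpr hadj), hx2 w hw2]
          push_cast
          linear_combination (1 : ℚ) * inv_mul_cancel₀ hn
      · have hsw : wqhSwitchedVert Γ C₁ C₂ u := Or.inr ⟨h1, h2⟩
        have hn1' : nbrsIn Γ' u C₁ = C₁.card :=
          nbrsIn_eq_cardB fun v hv =>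
            (F3' u v hu (Finset.mem_union_left _ hv) hsw).mpr (none_adj_of_nbrsIn h1 v hv)
        have hn2' : nbrsIn Γ' u C₂ = 0 :=
          nbrsIn_eq_zero fun v hv h =>
            (F3' u v hu (Finset.mem_union_right _ hv) hsw).mp h (all_adj_of_nbrsIn h2 v hv)
        rw [hn1', hn2']
        rcases Finset.mem_union.mp hw with hw1 | hw2
        · have hadj : ¬ Γ.Adj u w := none_adj_of_nbrsIn h1 w hw1
          rw [hAzero u w hadj, hA'one u w ((F3' u w hu hw hsw).mpr hadj), hx1 w hw1]
          push_cast
          linear_combination (1 : ℚ) * inv_mul_cancel₀ hn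
        · have hadj : Γ.Adj u w := all_adj_of_nbrsIn h2 w hw2
          rw [hAone u w hadj,
            hA'zero u w (fun h => (F3' u w hu hw hsw).mp h hadj), hx2 w hw2]
          push_cast
          linear_combination (-1 : ℚ) * inv_mul_cancel₀ hn
      · have hns : ¬ wqhSwitchedVert Γ C₁ C₂ u := hnsw u heq
        have hn1' : nbrsIn Γ' u C₁ = nbrsIn Γ u C₁ :=
          nbrsIn_congr fun v hv => F4 u hu hns v
        have hn2' : nbrsIn Γ' u C₂ = nbrsIn Γ u C₂ :=
          nbrsIn_congr fun v hv => F4 u hu hns v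
        rw [hn1', hn2', heq, adjEq u w (F4 u hu hns w)]
        ring
    · -- both outside
      simp only [hx0 u hu, hx0 w hw, mul_zero, zero_mul, sub_zero]
      exact (adjEq u w (F2 u w hu hw)).symm
  have hconj : Γ'.adjMatrix ℚ = Q * Γ.adjMatrix ℚ * Q := by
    calc Γ'.adjMatrix ℚ = Γ'.adjMatrix ℚ * (Q * Q) := by rw [hQQ, mul_one]
      _ = (Γ'.adjMatrix ℚ * Q) * Q := by rw [mul_assoc]
      _ = (Q * Γ.adjMatrix ℚ) * Q := by rw [key]
  have main : (Γ.adjMatrix ℚ).charpoly = (Γ'.adjMatrix ℚ).charpoly := by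
    rw [hconj, charpoly_conj_aux _ _ hQQ]
  -- descend to ℤ
  have hmapΓ : (Γ.adjMatrix ℤ).map (Int.castRingHom ℚ) = Γ.adjMatrix ℚ := by
    ext a b
    by_cases h : Γ.Adj a b <;> simp [Matrix.map_apply, h]
  have hmapΓ' : (Γ'.adjMatrix ℤ).map (Int.castRingHom ℚ) = Γ'.adjMatrix ℚ := by
    ext a b
    by_cases h : Γ'.Adj a b <;> simp [Matrix.map_apply, h]
  have hZ : (Γ.adjMatrix ℤ).charpoly = (Γ'.adjMatrix ℤ).charpoly := by
    apply Polynomial.map_injective (Int.castRingHom ℚ)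
      (fun a b h => by simpa using h)
    rw [← Matrix.charpoly_map, ← Matrix.charpoly_map, hmapΓ, hmapΓ', main]
  unfold Cospectral graphCharPoly
  rw [Subsingleton.elim (Classical.decEq V) ‹DecidableEq V›]
  exact hZ
end

section
/- For every integer n ≥ 8, any two adjacent vertices of the generalized Johnson graph J_{{2}}(n,4) have exactly n(n+3)/2 − 26 common neighbours. -/
/-!
Write `A = v ∩ w`, `B = v \ w`, `C = w \ v` and `D` for the complement of `v ∪ w`; then
`|A| = |B| = |C| = 2` and `|D| = n - 6`. A `4`-set meeting both `v` and `w` in two points and `A`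
in `a` points meets `B` and `C` in `2 - a` points each and `D` in `a` points, and any choice of
such pieces gives one. The count is therefore
`∑_{a ≤ 2} C(2,a)³ C(n-6,a) = 1 + 8 (n - 6) + C(n-6,2) = n (n + 3) / 2 - 26`.
-/

/-- The generalized Johnson graph `J_S(n,k)`: vertices are the `k`-element subsets of
`{1,…,n}` (modelled as `Fin n`), two vertices being adjacent exactly when the size of
their intersection lies in `S`. -/
def genJohnson (n k : ℕ) (S : Set ℕ) :
    SimpleGraph {s : Finset (Fin n) // s.card = k} where
  Adj v w := v ≠ w ∧ (v.1 ∩ w.1).card ∈ S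
  symm := by
    constructor
    rintro v w ⟨h1, h2⟩
    exact ⟨h1.symm, by rwa [Finset.inter_comm]⟩
  loopless := by constructor; rintro v ⟨h, _⟩; exact h rfl

open Finset

namespace Finset

variable {α ι : Type*} [Fintype α] [DecidableEq α] [Fintype ι] [DecidableEq ι]

theorem filter_biUnion_univ_eq_of_subset_fiber (c : α → ι) {f : ι → Finset α}
    (hf : ∀ i, f i ⊆ ({x | c x = i} : Finset α)) (i : ι) :
    {x ∈ univ.biUnion f | c x = i} = f i := by
  ext x
  simp only [mem_filter, mem_biUnion, mem_univ, true_and]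
  constructor
  · rintro ⟨⟨j, hx⟩, rfl⟩
    obtain rfl : c x = j := by simpa using hf j hx
    exact hx
  · intro hx
    exact ⟨⟨i, hx⟩, by simpa using hf i hx⟩

theorem card_filter_card_fiber_eq_prod_choose (c : α → ι) (k : ι → ℕ) :
    #{s : Finset α | ∀ i, #{x ∈ s | c x = i} = k i} =
      ∏ i, Nat.choose #{x | c x = i} (k i) := by
  simp_rw [← card_powersetCard, ← Fintype.card_piFinset]
  refine card_nbij' (fun s i => {x ∈ s | c x = i}) (fun f => univ.biUnion f) ?_ ?_ ?_ ?_
  · intro s hs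
    simp only [coe_filter, mem_univ, true_and, Set.mem_ofPred_eq] at hs
    simp only [mem_coe, Fintype.mem_piFinset, mem_powersetCard, hs, and_true]
    intro i x
    simp
  · intro f hf
    simp only [mem_coe, Fintype.mem_piFinset, mem_powersetCard] at hf
    simp only [coe_filter, mem_univ, true_and, Set.mem_ofPred_eq]
    intro i
    rw [filter_biUnion_univ_eq_of_subset_fiber c (fun j => (hf j).1), (hf i).2]
  · intro s _
    ext x
    simp
  · intro f hf
    simp only [mem_coe, Fintype.mem_piFinset, mem_powersetCard] at hf
    funext i
    exact filter_biUnion_univ_eq_of_subset_fiber c (fun j => (hf j).1) i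

end Finset

section VennRegion

variable {α : Type*} [DecidableEq α]

def vennRegion (v w : Finset α) (x : α) : Bool × Bool := (x ∈ v, x ∈ w)

section
variable (v w s : Finset α)

theorem card_eq_sum_card_vennRegion :
    #s = #{x ∈ s | vennRegion v w x = (true, true)}
      + #{x ∈ s | vennRegion v w x = (true, false)}
      + #{x ∈ s | vennRegion v w x = (false, true)}
      + #{x ∈ s | vennRegion v w x = (false, false)} := by
  rw [card_eq_sum_card_fiberwise fun x _ => mem_univ (vennRegion v w x)]
  simp only [Fintype.sum_prod_type, Fintype.sum_bool]
  ring

theorem card_inter_left_eq_vennRegion :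
    #(v ∩ s) = #{x ∈ s | vennRegion v w x = (true, true)} +
      #{x ∈ s | vennRegion v w x = (true, false)} := by
  rw [inter_comm, ← filter_mem_eq_inter, ← card_filter_add_card_filter_not (p := (· ∈ w)),
    filter_filter, filter_filter]
  simp [vennRegion]

theorem card_inter_right_eq_vennRegion :
    #(w ∩ s) = #{x ∈ s | vennRegion v w x = (true, true)} +
      #{x ∈ s | vennRegion v w x = (false, true)} := by
  rw [inter_comm, ← filter_mem_eq_inter, ← card_filter_add_card_filter_not (p := (· ∈ v)),
    filter_filter, filter_filter]
  simp [vennRegion, and_comm]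

theorem card_vennRegion_true_true :
    #{x ∈ s | vennRegion v w x = (true, true)} = #(s ∩ (v ∩ w)) := by
  rw [← filter_mem_eq_inter]
  simp [vennRegion]

end

theorem card_vennRegion_univ [Fintype α] {v w : Finset α} (hv : #v = 4) (hw : #w = 4)
    (hvw : #(v ∩ w) = 2) :
    #{x | vennRegion v w x = (true, true)} = 2 ∧ #{x | vennRegion v w x = (true, false)} = 2 ∧
      #{x | vennRegion v w x = (false, true)} = 2 ∧
      #{x | vennRegion v w x = (false, false)} = Fintype.card α - 6 := by
  have hv' := card_inter_left_eq_vennRegion v w univ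
  have hw' := card_inter_right_eq_vennRegion v w univ
  have huniv := card_eq_sum_card_vennRegion v w univ
  have hvw' := card_vennRegion_true_true v w univ
  simp only [inter_univ, univ_inter, card_univ] at hv' hw' huniv hvw'
  omega

-- The regions with `i.1 = i.2` are `v ∩ w` and the complement of `v ∪ w`.
theorem meets_four_two_two_iff_vennRegion {v w s : Finset α} {a : ℕ} :
    (#s = 4 ∧ #(v ∩ s) = 2 ∧ #(w ∩ s) = 2) ∧
        #{x ∈ s | vennRegion v w x = (true, true)} = a ↔
      a ≤ 2 ∧ ∀ i, #{x ∈ s | vennRegion v w x = i} = if i.1 = i.2 then a else 2 - a := by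
  have hv := card_inter_left_eq_vennRegion v w s
  have hw := card_inter_right_eq_vennRegion v w s
  have hs := card_eq_sum_card_vennRegion v w s
  simp only [Prod.forall, Bool.forall_bool, ↓reduceIte, Bool.false_eq_true, Bool.true_eq_false]
  omega

end VennRegion

theorem card_four_sets_meeting_two_in_two {α : Type*} [Fintype α] [DecidableEq α]
    {v w : Finset α} (hv : #v = 4) (hw : #w = 4) (hvw : #(v ∩ w) = 2) :
    #{s : Finset α | #s = 4 ∧ #(v ∩ s) = 2 ∧ #(w ∩ s) = 2} =
      1 + 8 * (Fintype.card α - 6) + (Fintype.card α - 6).choose 2 := by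
  set F : Finset (Finset α) := {s | #s = 4 ∧ #(v ∩ s) = 2 ∧ #(w ∩ s) = 2} with hF
  have hfiber : ∀ a ∈ range 3, #{s ∈ F | #{x ∈ s | vennRegion v w x = (true, true)} = a} =
        ∏ i, Nat.choose #{x | vennRegion v w x = i} (if i.1 = i.2 then a else 2 - a) := by
    intro a ha
    rw [hF, filter_filter, ← card_filter_card_fiber_eq_prod_choose]
    refine congrArg card (filter_congr fun s _ => ?_)
    rw [meets_four_two_two_iff_vennRegion, and_iff_right (Nat.lt_succ_iff.mp (mem_range.mp ha))]
  have hrange : ∀ s ∈ F, #{x ∈ s | vennRegion v w x = (true, true)} ∈ range 3 := by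
    intro s hs
    rw [hF, mem_filter] at hs
    exact mem_range.mpr (Nat.lt_succ_of_le (meets_four_two_two_iff_vennRegion.mp ⟨hs.2, rfl⟩).1)
  obtain ⟨htt, htf, hft, hff⟩ := card_vennRegion_univ hv hw hvw
  rw [card_eq_sum_card_fiberwise hrange, sum_congr rfl hfiber]
  simp only [sum_range_succ, Fintype.prod_prod_type, Fintype.prod_bool, htt, htf, hft, hff]
  norm_num
  ring

theorem genJohnson_card_commonNeighbors {n k : ℕ} {S : Set ℕ} (hk : k ∉ S)
    (v w : {s : Finset (Fin n) // #s = k}) :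
    Nat.card ((genJohnson n k S).commonNeighbors v w) =
      Nat.card {s : Finset (Fin n) // #s = k ∧ #(v.1 ∩ s) ∈ S ∧ #(w.1 ∩ s) ∈ S} := by
  have hne : ∀ u : {s : Finset (Fin n) // #s = k}, ∀ s, #(u.1 ∩ s) ∈ S → u.1 ≠ s := by
    rintro u s hS rfl
    rw [inter_self, u.2] at hS
    exact hk hS
  refine Nat.card_congr
    { toFun := fun u => ⟨u.1.1, u.1.2, u.2.1.2, u.2.2.2⟩
      invFun := fun s => ⟨⟨s.1, s.2.1⟩,
        ⟨fun h => hne v s.1 s.2.2.1 (congrArg Subtype.val h), s.2.2.1⟩,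
        ⟨fun h => hne w s.1 s.2.2.2 (congrArg Subtype.val h), s.2.2.2⟩⟩
      left_inv := fun _ => rfl
      right_inv := fun _ => rfl }

theorem one_add_eight_mul_add_choose_two_eq {n : ℕ} (hn : 6 ≤ n) :
    1 + 8 * (n - 6) + (n - 6).choose 2 = n * (n + 3) / 2 - 26 := by
  obtain ⟨m, rfl⟩ := Nat.exists_eq_add_of_le hn
  rw [Nat.add_sub_cancel_left, Nat.choose_two_right]
  rcases m with _ | p
  · rfl
  · have heven : Even ((p + 1) * p) := by
      rw [mul_comm]
      exact Nat.even_mul_succ_self p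
    rw [Nat.add_sub_cancel,
      show (6 + (p + 1)) * (6 + (p + 1) + 3) = (p + 1) * p + 16 * p + 70 by ring]
    generalize (p + 1) * p = q at heven ⊢
    obtain ⟨r, rfl⟩ := heven
    omega

/-- For every integer `n ≥ 8`, any two adjacent vertices of the generalized Johnson
graph `J_{{2}}(n,4)` have exactly `n(n+3)/2 − 26` common neighbours. -/
theorem johnson_two_n_four_common_neighbors (n : ℕ) (hn : 8 ≤ n)
    (v w : {s : Finset (Fin n) // s.card = 4})
    (hvw : (genJohnson n 4 {2}).Adj v w) :
    Nat.card ((genJohnson n 4 {2}).commonNeighbors v w) = n * (n + 3) / 2 - 26 := by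
  rw [genJohnson_card_commonNeighbors (by simp) v w]
  simp only [Set.mem_singleton_iff]
  rw [Nat.card_eq_fintype_card, Fintype.card_subtype,
    card_four_sets_meeting_two_in_two v.2 w.2 hvw.2, Fintype.card_fin,
    one_add_eight_mul_add_choose_two_eq (by omega)]
end

section
/- Let k ≥ 2, n ≥ 2k, and work in 𝔽_2^n with standard basis e_1,…,e_n. Let p_1 = ⟨e_1⟩, p_2 = ⟨e_2⟩, p_3 = ⟨e_3⟩, p_4 = ⟨e_1+e_2⟩, p_5 = ⟨e_1+e_3⟩, p_6 = ⟨e_2+e_3⟩, and let π be a (k−2)-dimensional subspace intersecting ⟨e_1,e_2,e_3⟩ trivially. Let C be the set of four k-dimensional subspaces {p_1+p_2+π, p_1+p_3+π, p_2+p_3+π, p_4+p_5+π}. Then any two distinct elements of C intersect in a (k−1)-dimensional subspace, and every k-dimensional subspace W of 𝔽_2^n with W ∉ C intersects trivially exactly 0, 2 or 4 of the four elements of C. -/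
open Submodule Module

namespace QK2

variable {V : Type*} [AddCommGroup V] [Module (ZMod 2) V]

lemma addSelf (x : V) : x + x = 0 := by
  have h2 : (2 : ZMod 2) = 0 := by decide
  calc x + x = (2 : ZMod 2) • x := by rw [two_smul]
    _ = 0 := by rw [h2, zero_smul]

lemma addBack (x y : V) : x + (x + y) = y := by
  rw [← add_assoc, addSelf, zero_add]

lemma addABAC (x y z : V) : (x + y) + (x + z) = y + z := by
  rw [add_add_add_comm, addSelf, zero_add]

lemma finrank_span_pair2 (u v : V) (hu : u ≠ 0) (hv : v ≠ 0) (huv : u + v ≠ 0) :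
    finrank (ZMod 2) (span (ZMod 2) {u, v}) = 2 := by
  have li : LinearIndependent (ZMod 2) ![u, v] := by
    rw [LinearIndependent.pair_iff]
    intro s t hst
    have hall : ∀ a : ZMod 2, a = 0 ∨ a = 1 := by decide
    rcases hall s with rfl | rfl <;> rcases hall t with rfl | rfl <;>
      simp only [zero_smul, one_smul, zero_add, add_zero] at hst <;>
      simp_all
  have hr : Set.range ![u, v] = {u, v} := by
    ext x
    simp [Fin.exists_fin_two]
    tauto
  have := finrank_span_eq_card li
  rwa [hr, Fintype.card_fin] at this

lemma mem_span_pair2 (u v x : V) :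
    x ∈ span (ZMod 2) {u, v} ↔ x = 0 ∨ x = u ∨ x = v ∨ x = u + v := by
  rw [Submodule.mem_span_pair]
  constructor
  · rintro ⟨a, b, rfl⟩
    have hall : ∀ a : ZMod 2, a = 0 ∨ a = 1 := by decide
    rcases hall a with rfl | rfl <;> rcases hall b with rfl | rfl <;> simp
  · rintro (rfl | rfl | rfl | rfl)
    · exact ⟨0, 0, by simp⟩
    · exact ⟨1, 0, by simp⟩
    · exact ⟨0, 1, by simp⟩
    · exact ⟨1, 1, by simp⟩

lemma inf_span_pair_eq_bot_iff (T : Submodule (ZMod 2) V) (u v : V)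
    (hu : u ≠ 0) (hv : v ≠ 0) (huv : u + v ≠ 0) :
    T ⊓ span (ZMod 2) {u, v} = ⊥ ↔ u ∉ T ∧ v ∉ T ∧ u + v ∉ T := by
  rw [eq_bot_iff]
  constructor
  · intro h
    refine ⟨fun hm => hu (h ⟨hm, subset_span (by simp)⟩),
      fun hm => hv (h ⟨hm, subset_span (by simp)⟩),
      fun hm => huv (h ⟨hm, ?_⟩)⟩
    exact add_mem (subset_span (by simp)) (subset_span (by simp))
  · rintro ⟨h1, h2, h3⟩ x ⟨hxT, hxs⟩
    rcases (mem_span_pair2 u v x).mp hxs with rfl | rfl | rfl | rfl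
    · rfl
    · exact absurd hxT h1
    · exact absurd hxT h2
    · exact absurd hxT h3

lemma key_inf_iff (π W V₃ L : Submodule (ZMod 2) V) (hWπ : W ⊓ π = ⊥)
    (hV₃π : π ⊓ V₃ = ⊥) (hL : L ≤ V₃) :
    W ⊓ (L ⊔ π) = ⊥ ↔ ((W ⊔ π) ⊓ V₃) ⊓ L = ⊥ := by
  constructor
  · intro h
    rw [eq_bot_iff]
    rintro x ⟨⟨hxWπ, hxV₃⟩, hxL⟩
    obtain ⟨w, hw, p, hp, hx⟩ := mem_sup.mp hxWπ
    have hw' : w ∈ W ⊓ (L ⊔ π) := by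
      refine ⟨hw, ?_⟩
      have hwxp : w = x + p := by rw [← hx, add_assoc, addSelf, add_zero]
      rw [hwxp]
      exact add_mem (mem_sup_left hxL) (mem_sup_right hp)
    have hw0 : w = 0 := by rw [h] at hw'; exact hw'
    have hxp : x = p := by rw [← hx, hw0, zero_add]
    have hfin : x ∈ π ⊓ V₃ := ⟨hxp ▸ hp, hxV₃⟩
    rw [hV₃π] at hfin; exact hfin
  · intro h
    rw [eq_bot_iff]
    rintro x ⟨hxW, hxLπ⟩
    obtain ⟨v, hv, p, hp, hx⟩ := mem_sup.mp hxLπ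
    have hv' : v ∈ ((W ⊔ π) ⊓ V₃) ⊓ L := by
      refine ⟨⟨?_, hL hv⟩, hv⟩
      have hvxp : v = x + p := by rw [← hx, add_assoc, addSelf, add_zero]
      rw [hvxp]
      exact add_mem (mem_sup_left hxW) (mem_sup_right hp)
    have hv0 : v = 0 := by rw [h] at hv'; exact hv'
    have hxp : x = p := by rw [← hx, hv0, zero_add]
    have hfin : x ∈ W ⊓ π := ⟨hxW, hxp ▸ hp⟩
    rw [hWπ] at hfin; exact hfin

def cnt (t1 t2 t3 t4 : Bool) : ℕ :=
  (if t1 then 1 else 0) + (if t2 then 1 else 0) + (if t3 then 1 else 0) + (if t4 then 1 else 0)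

def prop3 (a b c : Bool) : Prop :=
  (a = true → b = true → c = true) ∧ (a = true → c = true → b = true) ∧
    (b = true → c = true → a = true)

instance (a b c : Bool) : Decidable (prop3 a b c) := by unfold prop3; infer_instance

lemma prop3_helper (T : Submodule (ZMod 2) V) (x y z : V) (hxyz : x + y = z)
    (bx by' bz : Bool) (hx : bx = true ↔ x ∈ T) (hy : by' = true ↔ y ∈ T)
    (hz : bz = true ↔ z ∈ T) : prop3 bx by' bz := by
  refine ⟨fun h1 h2 => ?_, fun h1 h2 => ?_, fun h1 h2 => ?_⟩
  · exact hz.mpr (hxyz ▸ add_mem (hx.mp h1) (hy.mp h2))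
  · have : x + z = y := by rw [← hxyz, addBack]
    exact hy.mpr (this ▸ add_mem (hx.mp h1) (hz.mp h2))
  · have : y + z = x := by rw [← hxyz, add_comm x y, addBack]
    exact hx.mpr (this ▸ add_mem (hy.mp h1) (hz.mp h2))

lemma existsBool (P : Prop) : ∃ b : Bool, b = true ↔ P := by
  by_cases h : P
  · exact ⟨true, by simp [h]⟩
  · exact ⟨false, by simp [h]⟩

lemma bool_parity : ∀ b1 b2 b3 b4 b5 b6 b7 : Bool,
    prop3 b1 b2 b4 → prop3 b1 b3 b5 → prop3 b2 b3 b6 → prop3 b1 b6 b7 →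
    prop3 b2 b5 b7 → prop3 b3 b4 b7 → prop3 b4 b5 b6 →
    cnt (!(b1 || b2 || b4)) (!(b1 || b3 || b5)) (!(b2 || b3 || b6)) (!(b4 || b5 || b6))
      = 0 ∨
    cnt (!(b1 || b2 || b4)) (!(b1 || b3 || b5)) (!(b2 || b3 || b6)) (!(b4 || b5 || b6))
      = 2 ∨
    cnt (!(b1 || b2 || b4)) (!(b1 || b3 || b5)) (!(b2 || b3 || b6)) (!(b4 || b5 || b6))
      = 4 := by decide

lemma count4 (P : Fin 4 → Prop) (t : Fin 4 → Bool) (h : ∀ i, P i ↔ t i = true) :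
    Nat.card {i // P i} = cnt (t 0) (t 1) (t 2) (t 3) := by
  classical
  rw [Nat.card_congr (Equiv.subtypeEquivRight h), Nat.card_eq_fintype_card,
    Fintype.card_subtype, Finset.card_filter, Fin.sum_univ_four]
  simp [cnt]

end QK2

open QK2

set_option maxHeartbeats 1000000 in
/-- Let `k ≥ 2`, `n ≥ 2k` and work in `𝔽₂ⁿ` with standard basis `e₁,…,eₙ`. Let
`p₁ = ⟨e₁⟩`, `p₂ = ⟨e₂⟩`, `p₃ = ⟨e₃⟩`, `p₄ = ⟨e₁+e₂⟩`, `p₅ = ⟨e₁+e₃⟩`, `p₆ = ⟨e₂+e₃⟩`,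
and let `π` be a `(k−2)`-dimensional subspace intersecting `⟨e₁,e₂,e₃⟩` trivially.
Let `C` consist of the four `k`-dimensional subspaces `p₁+p₂+π`, `p₁+p₃+π`, `p₂+p₃+π`
and `p₄+p₅+π`. Then any two distinct elements of `C` intersect in a `(k−1)`-dimensional
subspace, and every `k`-dimensional subspace `W ∉ C` intersects trivially exactly `0`,
`2` or `4` of the four elements of `C`. -/
theorem qKneser_two_switching_set (k n : ℕ) (hk : 2 ≤ k) (hn : 2 * k ≤ n)
    (π : Submodule (ZMod 2) (Fin n → ZMod 2))
    (hπ : Module.finrank (ZMod 2) π = k - 2) :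
    let e1 : Fin n → ZMod 2 := Pi.single ⟨0, by omega⟩ 1
    let e2 : Fin n → ZMod 2 := Pi.single ⟨1, by omega⟩ 1
    let e3 : Fin n → ZMod 2 := Pi.single ⟨2, by omega⟩ 1
    let p1 := Submodule.span (ZMod 2) {e1}
    let p2 := Submodule.span (ZMod 2) {e2}
    let p3 := Submodule.span (ZMod 2) {e3}
    let p4 := Submodule.span (ZMod 2) {e1 + e2}
    let p5 := Submodule.span (ZMod 2) {e1 + e3}
    let C : Fin 4 → Submodule (ZMod 2) (Fin n → ZMod 2) :=
      ![p1 ⊔ p2 ⊔ π, p1 ⊔ p3 ⊔ π, p2 ⊔ p3 ⊔ π, p4 ⊔ p5 ⊔ π]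
    π ⊓ Submodule.span (ZMod 2) {e1, e2, e3} = ⊥ →
    (∀ i, Module.finrank (ZMod 2) (C i) = k) ∧
    (∀ i j, i ≠ j → Module.finrank (ZMod 2) ↥(C i ⊓ C j) = k - 1) ∧
    (∀ W : Submodule (ZMod 2) (Fin n → ZMod 2),
      Module.finrank (ZMod 2) W = k → (∀ i, W ≠ C i) →
      Nat.card {i : Fin 4 // W ⊓ C i = ⊥} ∈ ({0, 2, 4} : Set ℕ)) := by
  intro e1 e2 e3 p1 p2 p3 p4 p5 C hdisj
  classical
  set V3 := Submodule.span (ZMod 2) {e1, e2, e3} with hV3def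
  -- linear independence of e1, e2, e3
  have li3 : LinearIndependent (ZMod 2) ![e1, e2, e3] := by
    have hb := (Pi.basisFun (ZMod 2) (Fin n)).linearIndependent
    have hinj : Function.Injective
        (![⟨0, by omega⟩, ⟨1, by omega⟩, ⟨2, by omega⟩] : Fin 3 → Fin n) := by
      intro a b hab
      fin_cases a <;> fin_cases b <;> simp_all [Fin.ext_iff]
    have hcomp := hb.comp _ hinj
    have heq : ⇑(Pi.basisFun (ZMod 2) (Fin n)) ∘
        (![⟨0, by omega⟩, ⟨1, by omega⟩, ⟨2, by omega⟩] : Fin 3 → Fin n) = ![e1, e2, e3] := by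
      funext j
      fin_cases j <;> simp [e1, e2, e3]
    rwa [heq] at hcomp
  have hcomb : ∀ a b c : ZMod 2, a • e1 + b • e2 + c • e3 = 0 → a = 0 ∧ b = 0 ∧ c = 0 := by
    intro a b c h
    have := Fintype.linearIndependent_iff.mp li3 ![a, b, c]
      (by simpa [Fin.sum_univ_three] using h)
    exact ⟨this 0, this 1, this 2⟩
  have hone : (1 : ZMod 2) ≠ 0 := one_ne_zero
  have hne1 : e1 ≠ 0 := fun h => hone (hcomb 1 0 0 (by simpa using h)).1
  have hne2 : e2 ≠ 0 := fun h => hone (hcomb 0 1 0 (by simpa using h)).2.1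
  have hne3 : e3 ≠ 0 := fun h => hone (hcomb 0 0 1 (by simpa using h)).2.2
  have hne4 : e1 + e2 ≠ 0 := fun h => hone (hcomb 1 1 0 (by simpa using h)).1
  have hne5 : e1 + e3 ≠ 0 := fun h => hone (hcomb 1 0 1 (by simpa [add_assoc] using h)).1
  have hne6 : e2 + e3 ≠ 0 := fun h => hone (hcomb 0 1 1 (by simpa [add_assoc] using h)).2.1
  have hne7 : e1 + e2 + e3 ≠ 0 := fun h => hone (hcomb 1 1 1 (by simpa using h)).1
  -- memberships in V3
  have hm1 : e1 ∈ V3 := subset_span (by simp)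
  have hm2 : e2 ∈ V3 := subset_span (by simp)
  have hm3 : e3 ∈ V3 := subset_span (by simp)
  have hm4 : e1 + e2 ∈ V3 := add_mem hm1 hm2
  have hm5 : e1 + e3 ∈ V3 := add_mem hm1 hm3
  -- span pair identities
  have hp12 : p1 ⊔ p2 = span (ZMod 2) {e1, e2} := by
    show span (ZMod 2) {e1} ⊔ span (ZMod 2) {e2} = _
    rw [← Submodule.span_union, Set.singleton_union]
  have hp13 : p1 ⊔ p3 = span (ZMod 2) {e1, e3} := by
    show span (ZMod 2) {e1} ⊔ span (ZMod 2) {e3} = _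
    rw [← Submodule.span_union, Set.singleton_union]
  have hp23 : p2 ⊔ p3 = span (ZMod 2) {e2, e3} := by
    show span (ZMod 2) {e2} ⊔ span (ZMod 2) {e3} = _
    rw [← Submodule.span_union, Set.singleton_union]
  have hp45 : p4 ⊔ p5 = span (ZMod 2) {e1 + e2, e1 + e3} := by
    show span (ZMod 2) {e1 + e2} ⊔ span (ZMod 2) {e1 + e3} = _
    rw [← Submodule.span_union, Set.singleton_union]
  -- L ≤ V3 facts
  have hle12 : span (ZMod 2) {e1, e2} ≤ V3 := by
    rw [span_le]
    rintro x hx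
    simp only [Set.mem_insert_iff, Set.mem_singleton_iff] at hx
    rcases hx with rfl | rfl
    · exact hm1
    · exact hm2
  have hle13 : span (ZMod 2) {e1, e3} ≤ V3 := by
    rw [span_le]
    rintro x hx
    simp only [Set.mem_insert_iff, Set.mem_singleton_iff] at hx
    rcases hx with rfl | rfl
    · exact hm1
    · exact hm3
  have hle23 : span (ZMod 2) {e2, e3} ≤ V3 := by
    rw [span_le]
    rintro x hx
    simp only [Set.mem_insert_iff, Set.mem_singleton_iff] at hx
    rcases hx with rfl | rfl
    · exact hm2
    · exact hm3
  have hle45 : span (ZMod 2) {e1 + e2, e1 + e3} ≤ V3 := by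
    rw [span_le]
    rintro x hx
    simp only [Set.mem_insert_iff, Set.mem_singleton_iff] at hx
    rcases hx with rfl | rfl
    · exact hm4
    · exact hm5
  -- dimension of sup with π
  have hsupdim : ∀ L : Submodule (ZMod 2) (Fin n → ZMod 2), L ≤ V3 →
      finrank (ZMod 2) ↥(L ⊔ π) = finrank (ZMod 2) L + (k - 2) := by
    intro L hL
    have hdisj' : L ⊓ π = ⊥ := by
      rw [eq_bot_iff, ← hdisj]
      exact le_inf inf_le_right (inf_le_left.trans hL)
    have h := Submodule.finrank_sup_add_finrank_inf_eq L π
    rw [hdisj', hπ] at h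
    simp only [finrank_bot, add_zero] at h
    omega
  have hrV3 : finrank (ZMod 2) V3 = 3 := by
    have hr : Set.range ![e1, e2, e3] = {e1, e2, e3} := by
      ext x
      constructor
      · rintro ⟨j, rfl⟩
        fin_cases j <;> simp
      · intro hx
        simp only [Set.mem_insert_iff, Set.mem_singleton_iff] at hx
        rcases hx with rfl | rfl | rfl
        · exact ⟨0, rfl⟩
        · exact ⟨1, rfl⟩
        · exact ⟨2, rfl⟩
    have := finrank_span_eq_card li3
    rwa [hr, Fintype.card_fin] at this
  -- Part 1
  have c0 : finrank (ZMod 2) ↥(p1 ⊔ p2 ⊔ π) = k := by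
    rw [hp12, hsupdim _ hle12, finrank_span_pair2 e1 e2 hne1 hne2 hne4]
    omega
  have c1 : finrank (ZMod 2) ↥(p1 ⊔ p3 ⊔ π) = k := by
    rw [hp13, hsupdim _ hle13, finrank_span_pair2 e1 e3 hne1 hne3 hne5]
    omega
  have c2 : finrank (ZMod 2) ↥(p2 ⊔ p3 ⊔ π) = k := by
    rw [hp23, hsupdim _ hle23, finrank_span_pair2 e2 e3 hne2 hne3 hne6]
    omega
  have c3 : finrank (ZMod 2) ↥(p4 ⊔ p5 ⊔ π) = k := by
    have h45 : (e1 + e2) + (e1 + e3) = e2 + e3 := addABAC e1 e2 e3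
    rw [hp45, hsupdim _ hle45,
      finrank_span_pair2 (e1 + e2) (e1 + e3) hne4 hne5 (h45 ▸ hne6)]
    omega
  have hpart1 : ∀ i, finrank (ZMod 2) (C i) = k := by
    intro i
    fin_cases i
    exacts [c0, c1, c2, c3]
  refine ⟨hpart1, ?_, ?_⟩
  · -- Part 2
    have hsupV : finrank (ZMod 2) ↥(V3 ⊔ π) = k + 1 := by
      rw [hsupdim V3 le_rfl, hrV3]
      omega
    -- sup identities
    have s01 : C 0 ⊔ C 1 = V3 ⊔ π := by
      show (p1 ⊔ p2 ⊔ π) ⊔ (p1 ⊔ p3 ⊔ π) = V3 ⊔ π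
      have hset : ({e1, e2} ∪ {e1, e3} : Set (Fin n → ZMod 2)) = {e1, e2, e3} := by
        ext x
        simp only [Set.mem_union, Set.mem_insert_iff, Set.mem_singleton_iff]
        tauto
      rw [sup_sup_sup_comm, sup_idem, hp12, hp13, ← Submodule.span_union, hset, ← hV3def]
    have s02 : C 0 ⊔ C 2 = V3 ⊔ π := by
      show (p1 ⊔ p2 ⊔ π) ⊔ (p2 ⊔ p3 ⊔ π) = V3 ⊔ π
      have hset : ({e1, e2} ∪ {e2, e3} : Set (Fin n → ZMod 2)) = {e1, e2, e3} := by
        ext x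
        simp only [Set.mem_union, Set.mem_insert_iff, Set.mem_singleton_iff]
        tauto
      rw [sup_sup_sup_comm, sup_idem, hp12, hp23, ← Submodule.span_union, hset, ← hV3def]
    have s12 : C 1 ⊔ C 2 = V3 ⊔ π := by
      show (p1 ⊔ p3 ⊔ π) ⊔ (p2 ⊔ p3 ⊔ π) = V3 ⊔ π
      have hset : ({e1, e3} ∪ {e2, e3} : Set (Fin n → ZMod 2)) = {e1, e2, e3} := by
        ext x
        simp only [Set.mem_union, Set.mem_insert_iff, Set.mem_singleton_iff]
        tauto
      rw [sup_sup_sup_comm, sup_idem, hp13, hp23, ← Submodule.span_union, hset, ← hV3def]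
    have hsup3 : ∀ L : Submodule (ZMod 2) (Fin n → ZMod 2), L ≤ V3 →
        e1 ∈ L ⊔ span (ZMod 2) {e1 + e2, e1 + e3} →
        e2 ∈ L ⊔ span (ZMod 2) {e1 + e2, e1 + e3} →
        e3 ∈ L ⊔ span (ZMod 2) {e1 + e2, e1 + e3} →
        L ⊔ span (ZMod 2) {e1 + e2, e1 + e3} = V3 := by
      intro L hL h1 h2 h3
      apply le_antisymm (sup_le hL hle45)
      rw [hV3def, span_le]
      rintro x hx
      simp only [Set.mem_insert_iff, Set.mem_singleton_iff] at hx
      rcases hx with rfl | rfl | rfl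
      · exact h1
      · exact h2
      · exact h3
    have hm45a : e1 + e2 ∈ span (ZMod 2) {e1 + e2, e1 + e3} := subset_span (by simp)
    have hm45b : e1 + e3 ∈ span (ZMod 2) {e1 + e2, e1 + e3} := subset_span (by simp)
    have s03 : C 0 ⊔ C 3 = V3 ⊔ π := by
      show (p1 ⊔ p2 ⊔ π) ⊔ (p4 ⊔ p5 ⊔ π) = V3 ⊔ π
      rw [sup_sup_sup_comm, hp12, hp45, sup_idem]
      congr 1
      apply hsup3 _ hle12
      · exact mem_sup_left (subset_span (by simp))
      · exact mem_sup_left (subset_span (by simp))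
      · have hmem : e1 + (e1 + e3) ∈
            span (ZMod 2) {e1, e2} ⊔ span (ZMod 2) {e1 + e2, e1 + e3} :=
          add_mem (mem_sup_left (subset_span (by simp))) (mem_sup_right hm45b)
        rwa [addBack] at hmem
    have s13 : C 1 ⊔ C 3 = V3 ⊔ π := by
      show (p1 ⊔ p3 ⊔ π) ⊔ (p4 ⊔ p5 ⊔ π) = V3 ⊔ π
      rw [sup_sup_sup_comm, hp13, hp45, sup_idem]
      congr 1
      apply hsup3 _ hle13
      · exact mem_sup_left (subset_span (by simp))
      · have hmem : e1 + (e1 + e2) ∈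
            span (ZMod 2) {e1, e3} ⊔ span (ZMod 2) {e1 + e2, e1 + e3} :=
          add_mem (mem_sup_left (subset_span (by simp))) (mem_sup_right hm45a)
        rwa [addBack] at hmem
      · exact mem_sup_left (subset_span (by simp))
    have s23 : C 2 ⊔ C 3 = V3 ⊔ π := by
      show (p2 ⊔ p3 ⊔ π) ⊔ (p4 ⊔ p5 ⊔ π) = V3 ⊔ π
      rw [sup_sup_sup_comm, hp23, hp45, sup_idem]
      congr 1
      apply hsup3 _ hle23
      · have hmem : (e1 + e2) + e2 ∈
            span (ZMod 2) {e2, e3} ⊔ span (ZMod 2) {e1 + e2, e1 + e3} :=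
          add_mem (mem_sup_right hm45a) (mem_sup_left (subset_span (by simp)))
        rwa [add_assoc, addSelf, add_zero] at hmem
      · exact mem_sup_left (subset_span (by simp))
      · exact mem_sup_left (subset_span (by simp))
    have key : ∀ i j, C i ⊔ C j = V3 ⊔ π → finrank (ZMod 2) ↥(C i ⊓ C j) = k - 1 := by
      intro i j hsup
      have h := Submodule.finrank_sup_add_finrank_inf_eq (C i) (C j)
      rw [hsup, hsupV, hpart1 i, hpart1 j] at h
      omega
    have key' : ∀ i j, C j ⊔ C i = V3 ⊔ π → finrank (ZMod 2) ↥(C i ⊓ C j) = k - 1 := by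
      intro i j hsup
      rw [inf_comm]
      exact key j i hsup
    intro i j hne
    fin_cases i <;> fin_cases j
    exacts [absurd rfl hne, key 0 1 s01, key 0 2 s02, key 0 3 s03,
      key' 1 0 s01, absurd rfl hne, key 1 2 s12, key 1 3 s13,
      key' 2 0 s02, key' 2 1 s12, absurd rfl hne, key 2 3 s23,
      key' 3 0 s03, key' 3 1 s13, key' 3 2 s23, absurd rfl hne]
  · -- Part 3
    intro W hWk hWC
    by_cases hWπ : W ⊓ π = ⊥
    · obtain ⟨b1, hb1⟩ := existsBool (e1 ∈ (W ⊔ π) ⊓ V3)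
      obtain ⟨b2, hb2⟩ := existsBool (e2 ∈ (W ⊔ π) ⊓ V3)
      obtain ⟨b3, hb3⟩ := existsBool (e3 ∈ (W ⊔ π) ⊓ V3)
      obtain ⟨b4, hb4⟩ := existsBool (e1 + e2 ∈ (W ⊔ π) ⊓ V3)
      obtain ⟨b5, hb5⟩ := existsBool (e1 + e3 ∈ (W ⊔ π) ⊓ V3)
      obtain ⟨b6, hb6⟩ := existsBool (e2 + e3 ∈ (W ⊔ π) ⊓ V3)
      obtain ⟨b7, hb7⟩ := existsBool (e1 + e2 + e3 ∈ (W ⊔ π) ⊓ V3)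
      have c124 := prop3_helper _ _ _ _ rfl b1 b2 b4 hb1 hb2 hb4
      have c135 := prop3_helper _ _ _ _ rfl b1 b3 b5 hb1 hb3 hb5
      have c236 := prop3_helper _ _ _ _ rfl b2 b3 b6 hb2 hb3 hb6
      have c167 := prop3_helper _ e1 (e2 + e3) (e1 + e2 + e3) (add_assoc e1 e2 e3).symm
        b1 b6 b7 hb1 hb6 hb7
      have c257 := prop3_helper _ e2 (e1 + e3) (e1 + e2 + e3)
        (by rw [add_left_comm, ← add_assoc]) b2 b5 b7 hb2 hb5 hb7
      have c347 := prop3_helper _ e3 (e1 + e2) (e1 + e2 + e3) (add_comm e3 (e1 + e2))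
        b3 b4 b7 hb3 hb4 hb7
      have c456 := prop3_helper _ (e1 + e2) (e1 + e3) (e2 + e3) (addABAC e1 e2 e3)
        b4 b5 b6 hb4 hb5 hb6
      have hbp := bool_parity b1 b2 b3 b4 b5 b6 b7 c124 c135 c236 c167 c257 c347 c456
      have key0 : W ⊓ (p1 ⊔ p2 ⊔ π) = ⊥ ↔ (!(b1 || b2 || b4)) = true := by
        rw [hp12, key_inf_iff π W V3 _ hWπ hdisj hle12,
          inf_span_pair_eq_bot_iff _ e1 e2 hne1 hne2 hne4, ← hb1, ← hb2, ← hb4]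
        cases b1 <;> cases b2 <;> cases b4 <;> simp
      have key1 : W ⊓ (p1 ⊔ p3 ⊔ π) = ⊥ ↔ (!(b1 || b3 || b5)) = true := by
        rw [hp13, key_inf_iff π W V3 _ hWπ hdisj hle13,
          inf_span_pair_eq_bot_iff _ e1 e3 hne1 hne3 hne5, ← hb1, ← hb3, ← hb5]
        cases b1 <;> cases b3 <;> cases b5 <;> simp
      have key2 : W ⊓ (p2 ⊔ p3 ⊔ π) = ⊥ ↔ (!(b2 || b3 || b6)) = true := by
        rw [hp23, key_inf_iff π W V3 _ hWπ hdisj hle23,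
          inf_span_pair_eq_bot_iff _ e2 e3 hne2 hne3 hne6, ← hb2, ← hb3, ← hb6]
        cases b2 <;> cases b3 <;> cases b6 <;> simp
      have key3 : W ⊓ (p4 ⊔ p5 ⊔ π) = ⊥ ↔ (!(b4 || b5 || b6)) = true := by
        have h45 : (e1 + e2) + (e1 + e3) = e2 + e3 := addABAC e1 e2 e3
        rw [hp45, key_inf_iff π W V3 _ hWπ hdisj hle45,
          inf_span_pair_eq_bot_iff _ (e1 + e2) (e1 + e3) hne4 hne5 (h45 ▸ hne6),
          h45, ← hb4, ← hb5, ← hb6]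
        cases b4 <;> cases b5 <;> cases b6 <;> simp
      have hPt : ∀ i, (W ⊓ C i = ⊥) ↔
          (![!(b1 || b2 || b4), !(b1 || b3 || b5), !(b2 || b3 || b6), !(b4 || b5 || b6)] :
            Fin 4 → Bool) i = true := by
        intro i
        fin_cases i
        exacts [key0, key1, key2, key3]
      have hcard : Nat.card {i : Fin 4 // W ⊓ C i = ⊥} =
          cnt (!(b1 || b2 || b4)) (!(b1 || b3 || b5)) (!(b2 || b3 || b6))
            (!(b4 || b5 || b6)) :=
        count4 (fun i => W ⊓ C i = ⊥) _ hPt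
      rw [hcard]
      simpa using hbp
    · have hempty : IsEmpty {i : Fin 4 // W ⊓ C i = ⊥} := by
        constructor
        rintro ⟨i, hi⟩
        apply hWπ
        have hπle : π ≤ C i := by
          fin_cases i <;> exact le_sup_right
        exact eq_bot_iff.mpr (hi ▸ inf_le_inf le_rfl hπle)
      rw [Nat.card_of_isEmpty]
      simp
end

section
/- Let k ≥ 2 and n ≥ 2k. Let α be a k-dimensional subspace of 𝔽_2^n and L a 2-dimensional subspace of 𝔽_2^n with L ∩ α = 0. Then the number of k-dimensional subspaces W of 𝔽_2^n with L ⊆ W and W ∩ α = 0 is at least 2^{k(k−2)}; in particular, if k ≥ 3 this number is strictly greater than 1. -/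
open Module Submodule

theorem extend_disjoint {K V : Type*} [Field K] [AddCommGroup V] [Module K V]
    [FiniteDimensional K V]
    (m : ℕ) (A B : Submodule K V) (hAB : A ⊓ B = ⊥)
    (h : finrank K A + m + finrank K B ≤ finrank K V) :
    ∃ M : Submodule K V, A ≤ M ∧ finrank K M = finrank K A + m ∧ M ⊓ B = ⊥ := by
  induction m generalizing A with
  | zero => exact ⟨A, le_rfl, by simp, hAB⟩
  | succ m ih =>
    have hsup : finrank K (A ⊔ B : Submodule K V) < finrank K V := by
      have := Submodule.finrank_sup_add_finrank_inf_eq A B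
      have hle := Submodule.finrank_le (A ⊔ B : Submodule K V)
      omega
    have hne : (A ⊔ B : Submodule K V) ≠ ⊤ := by
      intro hEq
      rw [hEq, finrank_top] at hsup
      omega
    obtain ⟨v, hv⟩ : ∃ v : V, v ∉ (A ⊔ B : Submodule K V) := by
      by_contra hc
      push_neg at hc
      exact hne (eq_top_iff.2 fun x _ => hc x)
    have hv0 : v ≠ 0 := fun h0 => hv (h0 ▸ (A ⊔ B).zero_mem)
    have hvA : v ∉ A := fun h' => hv (le_sup_left (b := B) h')
    set A' := A ⊔ K ∙ v with hA'
    have hA'B : A' ⊓ B = ⊥ := by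
      rw [eq_bot_iff]
      rintro x ⟨hx1, hx2⟩
      obtain ⟨a, ha, w, hw, rfl⟩ := Submodule.mem_sup.1 hx1
      obtain ⟨c, rfl⟩ := Submodule.mem_span_singleton.1 hw
      rcases eq_or_ne c 0 with rfl | hc
      · simp only [zero_smul, add_zero] at hx2 ⊢
        have : a ∈ A ⊓ B := ⟨ha, hx2⟩
        rw [hAB] at this; exact this
      · exfalso; apply hv
        have : v = c⁻¹ • ((a + c • v) - a) := by
          rw [add_sub_cancel_left, smul_smul, inv_mul_cancel₀ hc, one_smul]
        rw [this]
        exact Submodule.smul_mem _ _ (Submodule.sub_mem _ ((le_sup_right : B ≤ A ⊔ B) hx2) ((le_sup_left : A ≤ A ⊔ B) ha))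
    have hrank : finrank K A' = finrank K A + 1 := by
      have h1 : finrank K (K ∙ v) = 1 := finrank_span_singleton hv0
      have h2 := Submodule.finrank_sup_add_finrank_inf_eq A (K ∙ v)
      have h3 : A ⊓ (K ∙ v) = ⊥ := by
        rw [eq_bot_iff]
        rintro x ⟨hx1, hx2⟩
        obtain ⟨c, rfl⟩ := Submodule.mem_span_singleton.1 hx2
        rcases eq_or_ne c 0 with rfl | hc
        · simp
        · exfalso
          apply hvA
          have := Submodule.smul_mem A c⁻¹ hx1
          rwa [smul_smul, inv_mul_cancel₀ hc, one_smul] at this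
      rw [h3, finrank_bot] at h2
      rw [hA']
      omega
    obtain ⟨M, hM1, hM2, hM3⟩ := ih A' hA'B (by rw [hrank]; omega)
    exact ⟨M, le_trans le_sup_left hM1, by rw [hM2, hrank]; omega, hM3⟩

/-- Let `k ≥ 2` and `n ≥ 2k`, let `α` be a `k`-dimensional subspace of `𝔽₂ⁿ` and `L` a
`2`-dimensional subspace with `L ∩ α = 0`. Then the number of `k`-dimensional subspaces
`W` of `𝔽₂ⁿ` with `L ⊆ W` and `W ∩ α = 0` is at least `2^{k(k−2)}`; in particular, if
`k ≥ 3`, this number is strictly greater than `1`. -/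
theorem count_complements_through_line (k n : ℕ) (hk : 2 ≤ k) (hn : 2 * k ≤ n)
    (α L : Submodule (ZMod 2) (Fin n → ZMod 2))
    (hα : Module.finrank (ZMod 2) α = k)
    (hL : Module.finrank (ZMod 2) L = 2)
    (hLα : L ⊓ α = ⊥) :
    2 ^ (k * (k - 2)) ≤
      Nat.card {W : Submodule (ZMod 2) (Fin n → ZMod 2) //
        Module.finrank (ZMod 2) W = k ∧ L ≤ W ∧ W ⊓ α = ⊥} ∧
    (3 ≤ k → 1 < Nat.card {W : Submodule (ZMod 2) (Fin n → ZMod 2) //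
        Module.finrank (ZMod 2) W = k ∧ L ≤ W ∧ W ⊓ α = ⊥}) := by
  have hVn : finrank (ZMod 2) (Fin n → ZMod 2) = n := by simp
  -- construct M
  obtain ⟨M, hLM, hMrank, hMα⟩ := extend_disjoint (k - 2) L α hLα (by
    rw [hL, hα, hVn]; omega)
  rw [hL] at hMrank
  have hMk : finrank (ZMod 2) M = k := by omega
  -- L inside M
  set L' : Submodule (ZMod 2) ↥M := Submodule.comap M.subtype L with hL'def
  have hL'rank : finrank (ZMod 2) L' = finrank (ZMod 2) L :=
    LinearEquiv.finrank_eq (Submodule.comapSubtypeEquivOfLe hLM)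
  have hQrank : finrank (ZMod 2) (↥M ⧸ L') = k - 2 := by
    have h1 := Submodule.finrank_quotient_add_finrank L'
    omega
  set D := (↥M ⧸ L') →ₗ[ZMod 2] ↥α with hDdef
  have hDcard : Nat.card D = 2 ^ (k * (k - 2)) := by
    have hQfin : Finite (↥M ⧸ L') := Finite.of_surjective _ (Submodule.mkQ_surjective L')
    have hfin : Finite D :=
      Finite.of_injective (fun f : D => (f : (↥M ⧸ L') → ↥α)) DFunLike.coe_injective
    have : Fintype D := Fintype.ofFinite D
    rw [Nat.card_eq_fintype_card, card_eq_pow_finrank (K := ZMod 2) (V := D), ZMod.card,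
      Module.finrank_linearMap, hQrank, hα, Nat.mul_comm]
  -- the injection
  set g : D → (↥M →ₗ[ZMod 2] (Fin n → ZMod 2)) := fun f => M.subtype + α.subtype ∘ₗ f ∘ₗ L'.mkQ with hgdef
  have hg_apply : ∀ (f : D) (x : ↥M), g f x = (x : Fin n → ZMod 2) + ((f (L'.mkQ x)) : Fin n → ZMod 2) := by
    intro f x; rfl
  have hg_inj : ∀ f : D, Function.Injective (g f) := by
    intro f x y hxy
    rw [hg_apply, hg_apply] at hxy
    have hmem : (x : Fin n → ZMod 2) - (y : Fin n → ZMod 2) ∈ M ⊓ α := by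
      constructor
      · exact Submodule.sub_mem _ x.2 y.2
      · have : (x : Fin n → ZMod 2) - (y : Fin n → ZMod 2) = ((f (L'.mkQ y)) : Fin n → ZMod 2) - ((f (L'.mkQ x)) : Fin n → ZMod 2) := by
          linear_combination hxy
        rw [this]
        exact Submodule.sub_mem _ (f (L'.mkQ y)).2 (f (L'.mkQ x)).2
    rw [hMα] at hmem
    have : (x : Fin n → ZMod 2) = (y : Fin n → ZMod 2) := by
      have := (Submodule.mem_bot _).1 hmem
      linear_combination this
    exact Subtype.ext this
  have hrange_rank : ∀ f : D, finrank (ZMod 2) (LinearMap.range (g f)) = k := by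
    intro f
    rw [LinearMap.finrank_range_of_inj (hg_inj f), hMk]
  have hLle : ∀ f : D, L ≤ LinearMap.range (g f) := by
    intro f x hx
    have hxM : x ∈ M := hLM hx
    refine ⟨⟨x, hxM⟩, ?_⟩
    rw [hg_apply]
    have : L'.mkQ ⟨x, hxM⟩ = 0 := by
      rw [Submodule.mkQ_apply, Submodule.Quotient.mk_eq_zero]
      exact hx
    rw [this, map_zero]
    simp
  have hrange_inf : ∀ f : D, LinearMap.range (g f) ⊓ α = ⊥ := by
    intro f
    rw [eq_bot_iff]
    rintro y ⟨⟨x, rfl⟩, hy2⟩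
    rw [hg_apply] at hy2 ⊢
    have hxα : (x : Fin n → ZMod 2) ∈ M ⊓ α := by
      refine ⟨x.2, ?_⟩
      have : (x : Fin n → ZMod 2) = ((x : Fin n → ZMod 2) + ((f (L'.mkQ x)) : Fin n → ZMod 2)) - ((f (L'.mkQ x)) : Fin n → ZMod 2) := by ring
      rw [this]
      exact Submodule.sub_mem _ hy2 (f (L'.mkQ x)).2
    rw [hMα] at hxα
    have hx0 : x = 0 := Subtype.ext ((Submodule.mem_bot _).1 hxα)
    rw [hx0]
    simp
  have hΦinj : Function.Injective (fun f : D => LinearMap.range (g f)) := by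
    intro f f' hff
    have hpt : ∀ x : ↥M, f (L'.mkQ x) = f' (L'.mkQ x) := by
      intro x
      have hff2 : LinearMap.range (g f) = LinearMap.range (g f') := hff
      have hx : g f x ∈ LinearMap.range (g f') := by
        rw [← hff2]; exact ⟨x, rfl⟩
      obtain ⟨x', hx'⟩ := hx
      rw [hg_apply, hg_apply] at hx'
      have hmem : (x' : Fin n → ZMod 2) - (x : Fin n → ZMod 2) ∈ M ⊓ α := by
        refine ⟨Submodule.sub_mem _ x'.2 x.2, ?_⟩
        have : (x' : Fin n → ZMod 2) - (x : Fin n → ZMod 2) = ((f (L'.mkQ x)) : Fin n → ZMod 2) - ((f' (L'.mkQ x')) : Fin n → ZMod 2) := by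
          linear_combination hx'
        rw [this]
        exact Submodule.sub_mem _ (f (L'.mkQ x)).2 (f' (L'.mkQ x')).2
      rw [hMα] at hmem
      have hxx : x' = x := Subtype.ext (by
        have := (Submodule.mem_bot _).1 hmem; linear_combination this)
      subst hxx
      have : ((f (L'.mkQ x')) : Fin n → ZMod 2) = ((f' (L'.mkQ x')) : Fin n → ZMod 2) := by linear_combination hx'.symm
      exact Subtype.ext this
    apply LinearMap.ext
    intro q
    obtain ⟨x, rfl⟩ := Submodule.mkQ_surjective L' q
    exact hpt x
  -- conclude
  have hFinSub : Finite (Submodule (ZMod 2) (Fin n → ZMod 2)) :=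
    Finite.of_injective _ (SetLike.coe_injective (A := Submodule (ZMod 2) (Fin n → ZMod 2)))
  set S := {W : Submodule (ZMod 2) (Fin n → ZMod 2) //
    finrank (ZMod 2) W = k ∧ L ≤ W ∧ W ⊓ α = ⊥}
  have hΨinj : Function.Injective (fun f : D =>
      (⟨LinearMap.range (g f), hrange_rank f, hLle f, hrange_inf f⟩ : S)) := by
    intro f f' h
    exact hΦinj (congrArg Subtype.val h)
  have hle : Nat.card D ≤ Nat.card S := Nat.card_le_card_of_injective _ hΨinj
  rw [hDcard] at hle
  refine ⟨hle, fun hk3 => ?_⟩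
  calc 1 < 2 ^ (k * (k - 2)) := by
        apply Nat.one_lt_two_pow
        have : 1 ≤ k - 2 := by omega
        positivity
    _ ≤ Nat.card S := hle
end

section
/- Let k ≥ 3 and n ≥ 2k, and let α, β, γ be k-dimensional subspaces of 𝔽_2^n such that α ∩ β ≠ 0, α ∩ γ ≠ 0 and β ∩ γ ≠ 0 (i.e., they are pairwise non-adjacent vertices of the q-Kneser graph K_2(n,k)). Then the number of k-dimensional subspaces δ of 𝔽_2^n with δ ∩ α = 0, δ ∩ β ≠ 0 and δ ∩ γ ≠ 0 is never equal to 1: it is either 0 or at least 2. -/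
/-- Let `k ≥ 3`, `n ≥ 2k`, and let `α`, `β`, `γ` be `k`-dimensional subspaces of `𝔽₂ⁿ`
that pairwise intersect non-trivially (i.e. they are pairwise non-adjacent vertices of
the `q`-Kneser graph `K_2(n,k)`). Then the number of `k`-dimensional subspaces `δ` of
`𝔽₂ⁿ` with `δ ∩ α = 0`, `δ ∩ β ≠ 0` and `δ ∩ γ ≠ 0` is never equal to `1`: it is either
`0` or at least `2`. -/
theorem count_never_one (k n : ℕ) (hk : 3 ≤ k) (hn : 2 * k ≤ n)
    (α β γ : Submodule (ZMod 2) (Fin n → ZMod 2))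
    (hα : Module.finrank (ZMod 2) α = k)
    (hβ : Module.finrank (ZMod 2) β = k)
    (hγ : Module.finrank (ZMod 2) γ = k)
    (hαβ : α ⊓ β ≠ ⊥) (hαγ : α ⊓ γ ≠ ⊥) (hβγ : β ⊓ γ ≠ ⊥) :
    Nat.card {δ : Submodule (ZMod 2) (Fin n → ZMod 2) //
        Module.finrank (ZMod 2) δ = k ∧ δ ⊓ α = ⊥ ∧ δ ⊓ β ≠ ⊥ ∧ δ ⊓ γ ≠ ⊥} = 0 ∨
    2 ≤ Nat.card {δ : Submodule (ZMod 2) (Fin n → ZMod 2) //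
        Module.finrank (ZMod 2) δ = k ∧ δ ⊓ α = ⊥ ∧ δ ⊓ β ≠ ⊥ ∧ δ ⊓ γ ≠ ⊥} := by
  set M := Fin n → ZMod 2
  set P : Submodule (ZMod 2) M → Prop := fun δ =>
    Module.finrank (ZMod 2) δ = k ∧ δ ⊓ α = ⊥ ∧ δ ⊓ β ≠ ⊥ ∧ δ ⊓ γ ≠ ⊥ with hP
  have hFin : Finite (Submodule (ZMod 2) M) :=
    Finite.of_injective (fun p => (p : Set M)) SetLike.coe_injective
  rcases isEmpty_or_nonempty {δ : Submodule (ZMod 2) M // P δ} with h | h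
  · left; exact Nat.card_of_isEmpty
  · right
    obtain ⟨⟨δ, hδk, hδα, hδβ, hδγ⟩⟩ := h
    -- pick nonzero witnesses
    have hαne : α ≠ ⊥ := by
      intro hbot
      rw [hbot, finrank_bot] at hα; omega
    obtain ⟨a, haα, ha0⟩ := (Submodule.ne_bot_iff α).mp hαne
    obtain ⟨b, hb, hb0⟩ := (Submodule.ne_bot_iff _).mp hδβ
    obtain ⟨c, hc, hc0⟩ := (Submodule.ne_bot_iff _).mp hδγ
    have hbδ : b ∈ δ := hb.1
    have hbβ : b ∈ β := hb.2
    have hcδ : c ∈ δ := hc.1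
    have hcγ : c ∈ γ := hc.2
    -- the subspace W = α ⊔ span {b, c}
    set W : Submodule (ZMod 2) M :=
      α ⊔ (Submodule.span (ZMod 2) {b} ⊔ Submodule.span (ZMod 2) {c}) with hW
    have haW : a ∈ W := Submodule.mem_sup_left haα
    have hbW : b ∈ W := Submodule.mem_sup_right
      (Submodule.mem_sup_left (Submodule.mem_span_singleton_self b))
    have hcW : c ∈ W := Submodule.mem_sup_right
      (Submodule.mem_sup_right (Submodule.mem_span_singleton_self c))
    -- δ is not contained in W
    have hδW : ¬ δ ≤ W := by
      intro hle
      have hWr : Module.finrank (ZMod 2) W ≤ k + 2 := by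
        calc Module.finrank (ZMod 2) W
            ≤ Module.finrank (ZMod 2) α +
              Module.finrank (ZMod 2)
                (Submodule.span (ZMod 2) {b} ⊔ Submodule.span (ZMod 2) {c} :
                  Submodule (ZMod 2) M) :=
              Submodule.finrank_add_le_finrank_add_finrank _ _
          _ ≤ k + (Module.finrank (ZMod 2) (Submodule.span (ZMod 2) {b}) +
              Module.finrank (ZMod 2) (Submodule.span (ZMod 2) {c})) := by
              rw [hα]
              exact Nat.add_le_add le_rfl
                (Submodule.finrank_add_le_finrank_add_finrank _ _)
          _ ≤ k + 2 := by
              rw [finrank_span_singleton hb0, finrank_span_singleton hc0]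
      have hsup : Module.finrank (ZMod 2) (δ ⊔ α : Submodule (ZMod 2) M) = k + k := by
        have := Submodule.finrank_sup_add_finrank_inf_eq δ α
        rw [hδα, finrank_bot, hδk, hα] at this
        omega
      have hle2 : (δ ⊔ α : Submodule (ZMod 2) M) ≤ W := sup_le hle le_sup_left
      have := Submodule.finrank_mono hle2
      rw [hsup] at this
      omega
    obtain ⟨x₀, hx₀δ, hx₀W⟩ := SetLike.not_le_iff_exists.mp hδW
    -- a linear functional vanishing on W but not on x₀
    obtain ⟨f, hfx₀, hfW⟩ := W.exists_dual_map_eq_bot_of_notMem hx₀W inferInstance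
    have hfW' : ∀ w ∈ W, f w = 0 := by
      intro w hw
      have : f w ∈ W.map f := Submodule.mem_map_of_mem hw
      rwa [hfW, Submodule.mem_bot] at this
    -- the transvection T x = x + f x • a
    set T : M →ₗ[ZMod 2] M := LinearMap.id + f.smulRight a with hT
    have hTapp : ∀ x : M, T x = x + f x • a := fun x => rfl
    have hTW : ∀ w ∈ W, T w = w := by
      intro w hw
      rw [hTapp, hfW' w hw, zero_smul, add_zero]
    have hTinv : Function.Involutive T := by
      intro x
      rw [hTapp, hTapp, map_add, map_smul, hfW' a haW, smul_eq_mul, mul_zero, add_zero,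
        add_assoc, ← add_smul]
      have h2 : f x + f x = 0 := by
        have : ∀ z : ZMod 2, z + z = 0 := by decide
        exact this _
      rw [h2, zero_smul, add_zero]
    set e : M ≃ₗ[ZMod 2] M := LinearEquiv.ofInvolutive T hTinv with he
    have heapp : ∀ x : M, e x = T x := fun x => rfl
    set δ' : Submodule (ZMod 2) M := δ.map (e : M →ₗ[ZMod 2] M) with hδ'
    -- δ' has the required properties
    have hδ'k : Module.finrank (ZMod 2) δ' = k := by
      rw [hδ', LinearEquiv.finrank_map_eq]; exact hδk
    have hδ'α : δ' ⊓ α = ⊥ := by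
      rw [eq_bot_iff]
      rintro x ⟨hx1, hx2⟩
      obtain ⟨d, hd, hdx⟩ := hx1
      have hxW : (x : M) ∈ W := Submodule.mem_sup_left hx2
      have : T x = x := hTW x hxW
      have hdx' : T d = x := hdx
      have : d = x := by
        have := hTinv d
        rw [hdx'] at this
        rw [← this, hTW x hxW]
      subst this
      have : d ∈ δ ⊓ α := ⟨hd, hx2⟩
      rw [hδα, Submodule.mem_bot] at this
      simp [this]
    have hbδ' : b ∈ δ' := by
      refine ⟨b, hbδ, ?_⟩
      show T b = b
      exact hTW b hbW
    have hcδ' : c ∈ δ' := by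
      refine ⟨c, hcδ, ?_⟩
      show T c = c
      exact hTW c hcW
    have hδ'β : δ' ⊓ β ≠ ⊥ :=
      (Submodule.ne_bot_iff _).mpr ⟨b, ⟨hbδ', hbβ⟩, hb0⟩
    have hδ'γ : δ' ⊓ γ ≠ ⊥ :=
      (Submodule.ne_bot_iff _).mpr ⟨c, ⟨hcδ', hcγ⟩, hc0⟩
    have hne : δ' ≠ δ := by
      intro heq
      have hTx₀ : T x₀ ∈ δ' := ⟨x₀, hx₀δ, rfl⟩
      rw [heq] at hTx₀
      have hfx1 : f x₀ = 1 := by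
        have : ∀ z : ZMod 2, z ≠ 0 → z = 1 := by decide
        exact this _ hfx₀
      rw [hTapp, hfx1, one_smul] at hTx₀
      have haδ : a ∈ δ := by
        have := Submodule.sub_mem δ hTx₀ hx₀δ
        simpa using this
      have : a ∈ δ ⊓ α := ⟨haδ, haα⟩
      rw [hδα, Submodule.mem_bot] at this
      exact ha0 this
    -- conclude: two distinct elements
    have : Nontrivial {δ : Submodule (ZMod 2) M // P δ} := by
      refine ⟨⟨δ', ⟨hδ'k, hδ'α, hδ'β, hδ'γ⟩⟩, ⟨δ, ⟨hδk, hδα, hδβ, hδγ⟩⟩, ?_⟩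
      intro hcontra
      exact hne (congrArg Subtype.val hcontra)
    exact Finite.one_lt_card_iff_nontrivial.mpr this
end
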